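/- arXiv:0809.2981 — 6 statements merged into one kernel-verified Lean document; each statement's English description precedes it below -/
import Mathlib

section
/- For any finite Coxeter system (W,S) and any w in W, every Bruhat-minimal element among the set {v ∈ W : v ≰ w} is bigrassmannian, i.e., both v and v⁻¹ have at most one right descent. -/
/-- The Bruhat order on a Coxeter group, via the subword property:
`u ≤ w` iff `u` is the product of some subword of some reduced word for `w`. -/
def BruhatLE {B W : Type*} [Group W] {M : CoxeterMatrix B} (cs : CoxeterSystem M W)
    (u w : W) : Prop :=
  ∃ l : List B, cs.IsReduced l ∧ cs.wordProd l = w ∧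
    ∃ l' : List B, l'.Sublist l ∧ cs.wordProd l' = u

/-!
If `v` has two right descents `s ≠ t` and is minimal with `v ≰ w`, then `v s ≤ w` and `v t ≤ w`.
Induction on `ℓ w`, peeling off a left descent `r` of `w` by the lifting property, shows that
this forces `v ≤ w`; the base case `w = 1` needs `s ↦ σ s` to be injective, which the geometric
representation provides. Inversion preserves the Bruhat order, so the same applies to `v⁻¹`.

The lifting property holds for the chain description of the Bruhat order, which agrees with the
subword description by the strong exchange property. Strong exchange comes from the action of
`W` on `W × ZMod 2` in which `σ i` conjugates the first factor and flips the sign over `σ i`: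
the sign that `π ω` attaches to `t` is the parity of the number of occurrences of `t` in the
right inversion sequence of `ω`, hence independent of the word.
-/

open List

theorem List.even_count_of_getElem_add_eq {α : Type*} [BEq α] (L : List α) {m : ℕ}
    (hlen : L.length = 2 * m) (hper : ∀ k (hk : k + m < L.length), L[k + m] = L[k]'(by omega))
    (a : α) : Even (L.count a) := by
  have hdrop : L.drop m = L.take m := by
    refine List.ext_getElem (by simp; omega) fun k h₁ h₂ => ?_
    simp only [getElem_drop, getElem_take, add_comm m k]
    exact hper k (by simp at h₁; omega)
  rw [← L.take_append_drop m, count_append, hdrop]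
  exact ⟨_, rfl⟩

namespace CoxeterMatrix

variable {B : Type*} (M : CoxeterMatrix B)

noncomputable def geomForm (i j : B) : ℝ := -Real.cos (Real.pi / M i j)

noncomputable def geomFormLeft (i : B) : (B →₀ ℝ) →ₗ[ℝ] ℝ :=
  Finsupp.linearCombination ℝ (M.geomForm i)

noncomputable def geomReflection (i : B) : Module.End ℝ (B →₀ ℝ) :=
  LinearMap.id - (M.geomFormLeft i).smulRight (Finsupp.single i 2)

theorem geomForm_self (i : B) : M.geomForm i i = 1 := by
  simp [geomForm]

theorem geomForm_comm (i j : B) : M.geomForm i j = M.geomForm j i := by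
  rw [geomForm, geomForm, M.symmetric]

theorem geomFormLeft_single (i j : B) : M.geomFormLeft i (Finsupp.single j 1) = M.geomForm i j := by
  simp [geomFormLeft]

theorem geomReflection_apply (i : B) (v : B →₀ ℝ) :
    M.geomReflection i v = v - (2 * M.geomFormLeft i v) • Finsupp.single i 1 := by
  simp [geomReflection, Finsupp.smul_single, mul_comm]

theorem geomReflection_single (i j : B) :
    M.geomReflection i (Finsupp.single j 1) =
      Finsupp.single j 1 - (2 * M.geomForm i j) • Finsupp.single i 1 := by
  rw [geomReflection_apply, geomFormLeft_single]

theorem geomReflection_of_geomFormLeft_eq_zero {i : B} {v : B →₀ ℝ}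
    (hv : M.geomFormLeft i v = 0) : M.geomReflection i v = v := by
  simp [geomReflection_apply, hv]

theorem geomReflection_mul_self (i : B) : M.geomReflection i * M.geomReflection i = 1 := by
  refine LinearMap.ext fun v => ?_
  have h : M.geomFormLeft i (M.geomReflection i v) = -M.geomFormLeft i v := by
    rw [geomReflection_apply, map_sub, map_smul, geomFormLeft_single, geomForm_self, smul_eq_mul]
    ring
  rw [Module.End.mul_apply, geomReflection_apply _ _ (M.geomReflection i v), h,
    geomReflection_apply, Module.End.one_apply]
  module

/-- For `θ = π / M i j`, `geomReflection i * geomReflection j` rotates the plane of `e i`, `e j`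
through `2θ`, taking `dihedralVec i j θ n` to `dihedralVec i j θ (n + 2)`. -/
noncomputable def dihedralVec (i j : B) (θ : ℝ) (n : ℤ) : B →₀ ℝ :=
  Real.sin ((n + 1) * θ) • Finsupp.single i 1 + Real.sin (n * θ) • Finsupp.single j 1

theorem geomReflection_dihedralVec {i j : B} {θ : ℝ} (h : M.geomForm j i = -Real.cos θ)
    (n : ℤ) : M.geomReflection j (dihedralVec i j θ n) = dihedralVec j i θ (n + 1) := by
  have hsin : Real.sin ((n + 1 + 1) * θ) =
      2 * Real.cos θ * Real.sin ((n + 1) * θ) - Real.sin (n * θ) := by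
    rw [show (n + 1 + 1) * θ = (n + 1) * θ + θ by ring, show (n : ℝ) * θ = (n + 1) * θ - θ by ring,
      Real.sin_add, Real.sin_sub]
    ring
  simp only [dihedralVec, map_add, map_smul, geomReflection_single, geomForm_self, h]
  push_cast
  rw [hsin]
  module

theorem exists_geomFormLeft_sub_eq_zero {i j : B} {c : ℝ} (hc : c ^ 2 ≠ 1)
    (hij : M.geomForm i j = -c) (v : B →₀ ℝ) :
    ∃ x y : ℝ,
      M.geomFormLeft i (v - x • Finsupp.single i 1 - y • Finsupp.single j 1) = 0 ∧
      M.geomFormLeft j (v - x • Finsupp.single i 1 - y • Finsupp.single j 1) = 0 := by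
  have hji : M.geomForm j i = -c := by rw [geomForm_comm, hij]
  have hc' : 1 - c ^ 2 ≠ 0 := sub_ne_zero.mpr (Ne.symm hc)
  set a := M.geomFormLeft i v
  set b := M.geomFormLeft j v
  refine ⟨(a + c * b) / (1 - c ^ 2), (b + c * a) / (1 - c ^ 2), ?_, ?_⟩ <;>
  · simp only [map_sub, map_smul, geomFormLeft_single, geomForm_self, hij, hji, smul_eq_mul]
    field_simp
    ring

theorem geomReflection_mul_pow_dihedralVec {i j : B} {θ : ℝ} (hij : M.geomForm i j = -Real.cos θ)
    (k : ℕ) (n : ℤ) :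
    ((M.geomReflection i * M.geomReflection j) ^ k) (dihedralVec i j θ n) =
      dihedralVec i j θ (n + 2 * k) := by
  have hji : M.geomForm j i = -Real.cos θ := by rw [geomForm_comm, hij]
  induction k generalizing n with
  | zero => simp
  | succ k ih =>
    rw [pow_succ, Module.End.mul_apply, Module.End.mul_apply, M.geomReflection_dihedralVec hji,
      M.geomReflection_dihedralVec hij, ih]
    push_cast
    ring_nf

theorem geomReflection_mul_pow_eq_one_of_apply_single {i j : B} {c : ℝ} (hc : c ^ 2 ≠ 1)
    (hij : M.geomForm i j = -c) {k : ℕ}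
    (hi : ((M.geomReflection i * M.geomReflection j) ^ k) (Finsupp.single i 1) =
      Finsupp.single i 1)
    (hj : ((M.geomReflection i * M.geomReflection j) ^ k) (Finsupp.single j 1) =
      Finsupp.single j 1) :
    (M.geomReflection i * M.geomReflection j) ^ k = 1 := by
  refine LinearMap.ext fun v => ?_
  obtain ⟨x, y, hwi, hwj⟩ := M.exists_geomFormLeft_sub_eq_zero hc hij v
  set w := v - x • Finsupp.single i 1 - y • Finsupp.single j 1
  have hw : (M.geomReflection i * M.geomReflection j) w = w := by
    rw [Module.End.mul_apply, M.geomReflection_of_geomFormLeft_eq_zero hwj,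
      M.geomReflection_of_geomFormLeft_eq_zero hwi]
  have hv : v = w + x • Finsupp.single i 1 + y • Finsupp.single j 1 := by simp only [w]; abel
  rw [hv, map_add, map_add, map_smul, map_smul, hi, hj, Module.End.pow_apply,
    Function.iterate_fixed hw, Module.End.one_apply]

theorem geomReflection_mul_pow_eq_one {i j : B} (hij : i ≠ j) :
    (M.geomReflection i * M.geomReflection j) ^ M i j = 1 := by
  obtain hm | hm := Nat.eq_zero_or_pos (M i j)
  · rw [hm, pow_zero]
  set m := M i j
  have hm2 : (2 : ℝ) ≤ m := by have := M.off_diagonal i j hij; exact_mod_cast (by omega : 2 ≤ m)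
  set θ := Real.pi / m
  have hsin : 0 < Real.sin θ :=
    Real.sin_pos_of_pos_of_lt_pi (by positivity) (div_lt_self Real.pi_pos (by linarith))
  have hij' : M.geomForm i j = -Real.cos θ := rfl
  have hfix (n : ℤ) : ((M.geomReflection i * M.geomReflection j) ^ m) (dihedralVec i j θ n) =
      dihedralVec i j θ n := by
    have h2π : 2 * (m : ℝ) * θ = 2 * Real.pi := by simp only [θ]; field_simp
    rw [M.geomReflection_mul_pow_dihedralVec hij', dihedralVec, dihedralVec]
    push_cast
    rw [show ((n : ℝ) + 2 * m + 1) * θ = (n + 1) * θ + 2 * Real.pi by linear_combination h2π,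
      show ((n : ℝ) + 2 * m) * θ = n * θ + 2 * Real.pi by linear_combination h2π,
      Real.sin_add_two_pi, Real.sin_add_two_pi]
  refine M.geomReflection_mul_pow_eq_one_of_apply_single
    (by nlinarith [Real.sin_sq_add_cos_sq θ]) hij' ?_ ?_
  · have h := hfix 0
    simp only [dihedralVec, Int.cast_zero, zero_add, one_mul, zero_mul, Real.sin_zero, zero_smul,
      add_zero, map_smul] at h
    exact smul_right_injective _ hsin.ne' h
  · have h := hfix (-1)
    simp only [dihedralVec, Int.cast_neg, Int.cast_one, neg_add_cancel, zero_mul, Real.sin_zero,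
      zero_smul, zero_add, neg_mul, one_mul, Real.sin_neg, neg_smul, map_neg, map_smul,
      neg_inj] at h
    exact smul_right_injective _ hsin.ne' h

theorem isLiftable_geomReflection : M.IsLiftable M.geomReflection := by
  intro i j
  obtain rfl | hij := eq_or_ne i j
  · rw [M.diagonal, pow_one, geomReflection_mul_self]
  · exact M.geomReflection_mul_pow_eq_one hij

end CoxeterMatrix

namespace CoxeterSystem

variable {B W : Type*} [Group W] {M : CoxeterMatrix B} (cs : CoxeterSystem M W)

theorem simple_injective : Function.Injective cs.simple := by
  intro i j h
  by_contra hij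
  have h' := congrArg (cs.lift ⟨_, M.isLiftable_geomReflection⟩) h
  simp only [lift_apply_simple] at h'
  have := congrArg (fun f : Module.End ℝ (B →₀ ℝ) => f (Finsupp.single i 1) i) h'
  simp [M.geomReflection_single, M.geomForm_self, Finsupp.single_eq_of_ne hij] at this

local prefix:100 "σ" => cs.simple
local prefix:100 "π" => cs.wordProd
local prefix:100 "ℓ" => cs.length
local prefix:100 "ris" => cs.rightInvSeq
local prefix:100 "lis" => cs.leftInvSeq

theorem prod_map_reverse_alternatingWord {G : Type*} [Monoid G] (f : B → G) (i j : B) (n : ℕ) :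
    ((alternatingWord j i (2 * n)).reverse.map f).prod = (f i * f j) ^ n := by
  induction n with
  | zero => simp [alternatingWord]
  | succ n ih =>
    rw [show 2 * (n + 1) = 2 * n + 1 + 1 by ring, alternatingWord, alternatingWord]
    simpa [pow_succ', mul_assoc] using congrArg (f i * f j * ·) ih

section SignRepresentation

open scoped Classical

theorem even_count_leftInvSeq_alternatingWord (i j : B) (t : W) :
    Even ((lis (alternatingWord j i (2 * M i j))).count t) := by
  refine List.even_count_of_getElem_add_eq _ (m := M i j) (by simp) (fun k hk => ?_) t
  simp only [length_leftInvSeq, length_alternatingWord] at hk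
  rw [getElem_leftInvSeq_alternatingWord _ _ _ _ _ hk,
    getElem_leftInvSeq_alternatingWord _ _ _ _ _ (by omega),
    prod_alternatingWord_eq_mul_pow, prod_alternatingWord_eq_mul_pow,
    show (2 * (k + M i j) + 1) / 2 = k + M i j by omega, show (2 * k + 1) / 2 = k by omega,
    pow_add, cs.simple_mul_simple_pow, mul_one, if_neg (Nat.not_even_two_mul_add_one _),
    if_neg (Nat.not_even_two_mul_add_one _)]

noncomputable def signFlip (i : B) : Equiv.Perm (W × ZMod 2) :=
  Function.Involutive.toPerm (fun p => (σ i * p.1 * σ i, p.2 + if p.1 = σ i then 1 else 0)) <| by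
    rintro ⟨t, e⟩
    have hconj : σ i * t * σ i = σ i ↔ t = σ i := by
      rw [mul_assoc, mul_eq_left, mul_eq_one_iff_eq_inv, inv_simple]
    ext
    · simp [mul_assoc]
    · by_cases ht : t = σ i <;> simp [ht, hconj, add_assoc, (by decide : (1 : ZMod 2) + 1 = 0)]

@[simp] theorem signFlip_apply (i : B) (t : W) (e : ZMod 2) :
    cs.signFlip i (t, e) = (σ i * t * σ i, e + if t = σ i then 1 else 0) := rfl

theorem prod_map_signFlip_apply (ω : List B) (t : W) (e : ZMod 2) :
    (ω.map cs.signFlip).prod (t, e) = (π ω * t * (π ω)⁻¹, e + (ris ω).count t) := by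
  induction ω generalizing e with
  | nil => simp
  | cons i ω ih =>
    have hcond : π ω * t * (π ω)⁻¹ = σ i ↔ (π ω)⁻¹ * σ i * π ω = t := by
      rw [mul_inv_eq_iff_eq_mul, ← eq_inv_mul_iff_mul_eq, eq_comm, mul_assoc]
    rw [map_cons, prod_cons, Equiv.Perm.mul_apply, ih, signFlip_apply, wordProd_cons,
      rightInvSeq, count_cons, Prod.mk.injEq]
    refine ⟨by simp [mul_assoc], ?_⟩
    by_cases h : π ω * t * (π ω)⁻¹ = σ i
    · simp [h, hcond.mp h, add_assoc]
    · simp [h, mt hcond.mpr h]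

theorem isLiftable_signFlip : M.IsLiftable cs.signFlip := by
  intro i j
  rw [← prod_map_reverse_alternatingWord]
  ext1 ⟨t, e⟩
  have hπ : π (alternatingWord j i (2 * M i j)).reverse = 1 := by
    rw [wordProd, prod_map_reverse_alternatingWord, cs.simple_mul_simple_pow]
  obtain ⟨c, hc⟩ := cs.even_count_leftInvSeq_alternatingWord i j t
  rw [prod_map_signFlip_apply, hπ, rightInvSeq_reverse, count_reverse, hc]
  simp [← two_mul, show (2 : ZMod 2) = 0 from rfl]

noncomputable def signRep : W →* Equiv.Perm (W × ZMod 2) :=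
  cs.lift ⟨cs.signFlip, cs.isLiftable_signFlip⟩

noncomputable def inversionSign (w t : W) : ZMod 2 := (cs.signRep w (t, 0)).2

theorem signRep_wordProd (ω : List B) (t : W) (e : ZMod 2) :
    cs.signRep (π ω) (t, e) = (π ω * t * (π ω)⁻¹, e + (ris ω).count t) := by
  have h : cs.signRep ∘ cs.simple = cs.signFlip :=
    funext (cs.lift_apply_simple cs.isLiftable_signFlip)
  rw [← cs.prod_map_signFlip_apply, ← h, ← map_map, ← map_list_prod]
  rfl

theorem inversionSign_wordProd (ω : List B) (t : W) :
    cs.inversionSign (π ω) t = (ris ω).count t := by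
  simp [inversionSign, signRep_wordProd]

theorem signRep_apply (w t : W) (e : ZMod 2) :
    cs.signRep w (t, e) = (w * t * w⁻¹, e + cs.inversionSign w t) := by
  obtain ⟨ω, rfl⟩ := cs.wordProd_surjective w
  rw [signRep_wordProd, inversionSign_wordProd]

theorem inversionSign_mul (a b t : W) :
    cs.inversionSign (a * b) t = cs.inversionSign b t + cs.inversionSign a (b * t * b⁻¹) := by
  rw [inversionSign, map_mul, Equiv.Perm.mul_apply, signRep_apply, signRep_apply, zero_add]

theorem inversionSign_one (t : W) : cs.inversionSign 1 t = 0 := by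
  simp [inversionSign]

theorem inversionSign_simple_self (i : B) : cs.inversionSign (σ i) (σ i) = 1 := by
  simpa using cs.inversionSign_wordProd [i] (σ i)

theorem IsReflection.inversionSign_self {t : W} (ht : cs.IsReflection t) :
    cs.inversionSign t t = 1 := by
  obtain ⟨x, i, rfl⟩ := ht
  have hconj : x⁻¹ * (x * σ i * x⁻¹) * x⁻¹⁻¹ = σ i := by group
  have hx := cs.inversionSign_mul x x⁻¹ (x * σ i * x⁻¹)
  rw [mul_inv_cancel, inversionSign_one, hconj] at hx
  rw [inversionSign_mul, inversionSign_mul, hconj, mul_inv_cancel_right, inversionSign_simple_self]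
  linear_combination -hx

theorem mem_rightInvSeq_of_isRightInversion {ω : List B} {t : W}
    (ht : cs.IsRightInversion (π ω) t) : t ∈ ris ω := by
  obtain ⟨α, hα, hαω⟩ := cs.exists_isReduced (π ω * t)
  have hω : π α * t = π ω := by rw [← hαω, mul_assoc, ht.1.mul_self, mul_one]
  have hnot : t ∉ ris α := fun hmem => by
    have := (cs.isRightInversion_of_mem_rightInvSeq hα hmem).2
    rw [hω] at this
    exact lt_asymm this (hαω ▸ ht.2)
  have hsign := cs.inversionSign_mul (π α) t t
  rw [hω, mul_inv_cancel_right, inversionSign_wordProd, inversionSign_wordProd,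
    ht.1.inversionSign_self, count_eq_zero_of_not_mem hnot] at hsign
  by_contra hmem
  rw [count_eq_zero_of_not_mem hmem] at hsign
  simp at hsign

end SignRepresentation

theorem exists_eraseIdx_wordProd_eq_mul {ω : List B} {t : W} (ht : cs.IsRightInversion (π ω) t) :
    ∃ j < ω.length, π (ω.eraseIdx j) = π ω * t := by
  obtain ⟨j, hj, hget⟩ := List.mem_iff_getElem.mp (cs.mem_rightInvSeq_of_isRightInversion ht)
  rw [length_rightInvSeq] at hj
  refine ⟨j, hj, ?_⟩
  rw [← wordProd_mul_getD_rightInvSeq, getD_eq_getElem _ _ (by simpa using hj), hget]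

theorem simple_mul_mul_eq_or_length_lt {w t : W} {i : B} (ht : cs.IsRightInversion w t) :
    σ i * w * t = w ∨ ℓ (σ i * w * t) < ℓ (σ i * w) := by
  obtain ⟨γ, hγ, hγw⟩ := cs.exists_isReduced (σ i * w)
  have hw : π (i :: γ) = w := by rw [wordProd_cons, ← hγw, simple_mul_simple_cancel_left]
  obtain ⟨j, hj, hπ⟩ := cs.exists_eraseIdx_wordProd_eq_mul (hw ▸ ht)
  rw [hw] at hπ
  cases j with
  | zero =>
    left
    rw [eraseIdx_cons_zero, ← hγw] at hπ
    rw [hπ, mul_assoc, ht.1.mul_self, mul_one]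
  | succ k =>
    right
    have hk : k < γ.length := by simpa using hj
    rw [eraseIdx_cons_succ, wordProd_cons] at hπ
    rw [mul_assoc, ← hπ, simple_mul_simple_cancel_left, hγw, hγ]
    have := cs.length_wordProd_le (γ.eraseIdx k)
    rw [length_eraseIdx_of_lt hk] at this
    omega

def BruhatStep (x y : W) : Prop := ∃ t, cs.IsReflection t ∧ y = x * t ∧ ℓ x < ℓ y

def ChainLE : W → W → Prop := Relation.ReflTransGen cs.BruhatStep

local infix:50 " ≤ᵇ " => cs.ChainLE

variable {cs}

theorem ChainLE.refl (x : W) : x ≤ᵇ x := Relation.ReflTransGen.refl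

theorem ChainLE.trans {x y z : W} (hxy : x ≤ᵇ y) (hyz : y ≤ᵇ z) : x ≤ᵇ z :=
  Relation.ReflTransGen.trans hxy hyz

theorem BruhatStep.chainLE {x y : W} (h : cs.BruhatStep x y) : x ≤ᵇ y :=
  Relation.ReflTransGen.single h

theorem ChainLE.length_le {x y : W} (h : x ≤ᵇ y) : ℓ x ≤ ℓ y := by
  induction h with
  | refl => rfl
  | tail _ hstep ih => obtain ⟨_, _, _, hlt⟩ := hstep; omega

variable (cs)

theorem chainLE_simple_mul {x : W} {i : B} (h : ℓ x < ℓ (σ i * x)) : x ≤ᵇ σ i * x := by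
  refine BruhatStep.chainLE ⟨x⁻¹ * σ i * x, ?_, by group, h⟩
  simpa using (cs.isReflection_simple i).conj x⁻¹

theorem simple_mul_chainLE {x : W} {i : B} (h : ℓ (σ i * x) < ℓ x) : σ i * x ≤ᵇ x := by
  simpa using cs.chainLE_simple_mul (x := σ i * x) (i := i) (by simpa using h)

theorem mul_simple_chainLE {x : W} {i : B} (h : ℓ (x * σ i) < ℓ x) : x * σ i ≤ᵇ x :=
  BruhatStep.chainLE ⟨σ i, cs.isReflection_simple i, by simp [mul_assoc], h⟩

variable {cs}

theorem BruhatStep.simple_mul_or_eq {u w : W} (h : cs.BruhatStep u w) (i : B) :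
    cs.BruhatStep (σ i * u) (σ i * w) ∨ σ i * u = w := by
  obtain ⟨t, ht, rfl, hlt⟩ := h
  obtain hdown | hup := (ht.length_mul_left_ne (σ i * u)).lt_or_gt
  · have hwt : cs.IsRightInversion (u * t) t := ⟨ht, by rwa [mul_assoc, ht.mul_self, mul_one]⟩
    rcases cs.simple_mul_mul_eq_or_length_lt (i := i) hwt with heq | hlt'
    · right; rwa [mul_assoc, mul_assoc, ht.mul_self, mul_one] at heq
    · rw [mul_assoc, mul_assoc, ht.mul_self, mul_one] at hlt'
      rw [mul_assoc] at hdown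
      omega
  · exact .inl ⟨t, ht, (mul_assoc ..).symm, by rwa [← mul_assoc]⟩

theorem ChainLE.simple_mul_or {u w : W} (h : u ≤ᵇ w) (i : B) :
    σ i * u ≤ᵇ w ∨ σ i * u ≤ᵇ σ i * w := by
  induction h with
  | refl => exact .inr (.refl _)
  | tail _ hstep ih =>
    rcases ih with h' | h'
    · exact .inl (h'.trans hstep.chainLE)
    · rcases hstep.simple_mul_or_eq i with hstep' | heq
      · exact .inr (h'.trans hstep'.chainLE)
      · exact .inl (heq ▸ h')

theorem ChainLE.simple_mul_mono {u w : W} (h : u ≤ᵇ w) {i : B} (hw : ℓ w < ℓ (σ i * w)) :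
    σ i * u ≤ᵇ σ i * w :=
  (h.simple_mul_or i).elim (fun h' => h'.trans (cs.chainLE_simple_mul hw)) id

theorem ChainLE.of_simple_mul {x u : W} {i : B} (hu : ℓ (σ i * u) < ℓ u)
    (h : σ i * x ≤ᵇ σ i * u) : x ≤ᵇ u := by
  rcases h.simple_mul_or i with h' | h' <;>
    simp only [simple_mul_simple_cancel_left] at h'
  · exact h'.trans (cs.simple_mul_chainLE hu)
  · exact h'

variable (cs)

theorem exists_sublist_of_chainLE {x : W} {ω : List B} (h : x ≤ᵇ π ω) :
    ∃ l, l <+ ω ∧ π l = x := by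
  induction h using Relation.ReflTransGen.head_induction_on with
  | refl => exact ⟨ω, .refl ω, rfl⟩
  | head hstep _ ih =>
    obtain ⟨l, hl, hπ⟩ := ih
    obtain ⟨t, ht, rfl, hlt⟩ := hstep
    have hinv : cs.IsRightInversion (π l) t := ⟨ht, by rwa [hπ, mul_assoc, ht.mul_self, mul_one]⟩
    obtain ⟨j, -, hj⟩ := cs.exists_eraseIdx_wordProd_eq_mul hinv
    refine ⟨l.eraseIdx j, (eraseIdx_sublist l j).trans hl, ?_⟩
    rw [hj, hπ, mul_assoc, ht.mul_self, mul_one]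

theorem chainLE_of_sublist {ω l : List B} (hω : cs.IsReduced ω) (hl : l <+ ω) : π l ≤ᵇ π ω := by
  induction ω generalizing l with
  | nil => rw [sublist_nil.mp hl]; exact .refl _
  | cons i α ih =>
    have hα : cs.IsReduced α := by simpa using hω.drop 1
    have hlen : ℓ (π α) < ℓ (σ i * π α) := by
      rw [← wordProd_cons, hω, hα]; simp
    rw [wordProd_cons]
    cases hl with
    | cons _ hl => exact (ih hα hl).trans (cs.chainLE_simple_mul hlen)
    | cons_cons _ hl => rw [wordProd_cons]; exact (ih hα hl).simple_mul_mono hlen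

theorem bruhatLE_iff_chainLE {x w : W} : BruhatLE cs x w ↔ x ≤ᵇ w := by
  constructor
  · rintro ⟨ω, hω, rfl, l, hl, rfl⟩
    exact cs.chainLE_of_sublist hω hl
  · intro h
    obtain ⟨ω, hω, rfl⟩ := cs.exists_isReduced w
    obtain ⟨l, hl, rfl⟩ := cs.exists_sublist_of_chainLE h
    exact ⟨ω, hω, rfl, l, hl, rfl⟩

variable {cs}

theorem ChainLE.eq_one {x : W} (h : x ≤ᵇ 1) : x = 1 :=
  cs.length_eq_zero_iff.mp (Nat.le_zero.mp (cs.length_one ▸ h.length_le))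

theorem ChainLE.le_simple_mul_or_simple_mul_le {x u : W} (h : x ≤ᵇ u) (i : B) :
    x ≤ᵇ σ i * u ∨ σ i * x ≤ᵇ σ i * u := by
  obtain ⟨γ, hγ, hγu⟩ := cs.exists_isReduced (σ i * u)
  have hω : π (i :: γ) = u := by rw [wordProd_cons, ← hγu, simple_mul_simple_cancel_left]
  obtain ⟨l, hl, rfl⟩ := cs.exists_sublist_of_chainLE (hω ▸ h)
  rw [hγu]
  cases hl with
  | cons _ hl => exact .inl (cs.chainLE_of_sublist hγ hl)
  | cons_cons _ hl =>
    rw [wordProd_cons, simple_mul_simple_cancel_left]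
    exact .inr (cs.chainLE_of_sublist hγ hl)

theorem ChainLE.le_simple_mul {x u : W} {i : B} (h : x ≤ᵇ u) (hx : ℓ x < ℓ (σ i * x)) :
    x ≤ᵇ σ i * u :=
  (h.le_simple_mul_or_simple_mul_le i).elim id (cs.chainLE_simple_mul hx).trans

theorem ChainLE.simple_mul_le_simple_mul {x u : W} {i : B} (h : x ≤ᵇ u)
    (hx : ℓ (σ i * x) < ℓ x) : σ i * x ≤ᵇ σ i * u :=
  (h.le_simple_mul_or_simple_mul_le i).elim (cs.simple_mul_chainLE hx).trans id

theorem length_lt_simple_mul_mul_simple {v : W} {r s : B} (hr : ℓ v < ℓ (σ r * v))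
    (hs : ℓ (v * σ s) < ℓ v) : ℓ (v * σ s) < ℓ (σ r * (v * σ s)) := by
  have h₁ := cs.length_simple_mul v r
  have h₂ := cs.length_mul_simple (σ r * v) s
  rw [mul_assoc] at h₂
  omega

theorem ChainLE.chainLE_or_of_mul_simple {u v : W} {r s : B} (hru : ℓ (σ r * u) < ℓ u)
    (hrv : ℓ (σ r * v) < ℓ v) (hs : ℓ (v * σ s) < ℓ v) (h : v * σ s ≤ᵇ u) :
    v ≤ᵇ u ∨ σ r * v * σ s ≤ᵇ σ r * u ∧ ℓ (σ r * v * σ s) < ℓ (σ r * v) := by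
  rcases cs.simple_mul_mul_eq_or_length_lt (i := r) ⟨cs.isReflection_simple s, hs⟩ with heq | hlt
  · left
    have hvs : σ r * v = v * σ s := by
      conv_rhs => rw [← heq]
      rw [mul_assoc _ (σ s), simple_mul_simple_self, mul_one]
    refine ChainLE.of_simple_mul hru ?_
    rw [hvs]
    refine h.le_simple_mul ?_
    rwa [← mul_assoc, heq]
  · right
    refine ⟨?_, hlt⟩
    rw [mul_assoc]
    refine h.simple_mul_le_simple_mul ?_
    have := cs.length_simple_mul v r
    have := cs.length_mul_simple v s
    rw [← mul_assoc]
    omega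

theorem chainLE_of_mul_simple_chainLE_of_ne {u v : W} {s t : B} (hst : s ≠ t)
    (hs : ℓ (v * σ s) < ℓ v) (ht : ℓ (v * σ t) < ℓ v)
    (hsu : v * σ s ≤ᵇ u) (htu : v * σ t ≤ᵇ u) : v ≤ᵇ u := by
  obtain hu | hu := eq_or_ne u 1
  · have h₁ := mul_eq_one_iff_eq_inv.mp (hu ▸ hsu).eq_one
    have h₂ := mul_eq_one_iff_eq_inv.mp (hu ▸ htu).eq_one
    rw [inv_simple] at h₁ h₂
    exact absurd (cs.simple_injective (h₁.symm.trans h₂)) hst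
  obtain ⟨r, hr⟩ := cs.exists_leftDescent_of_ne_one hu
  obtain hrv | hrv := (cs.length_simple_mul_ne v r).lt_or_gt
  · obtain hv | ⟨hsu', hs'⟩ := hsu.chainLE_or_of_mul_simple hr hrv hs
    · exact hv
    obtain hv | ⟨htu', ht'⟩ := htu.chainLE_or_of_mul_simple hr hrv ht
    · exact hv
    exact (chainLE_of_mul_simple_chainLE_of_ne hst hs' ht' hsu' htu').of_simple_mul hr
  · have hsu' := hsu.le_simple_mul (cs.length_lt_simple_mul_mul_simple hrv hs)
    have htu' := htu.le_simple_mul (cs.length_lt_simple_mul_mul_simple hrv ht)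
    exact (chainLE_of_mul_simple_chainLE_of_ne hst hs ht hsu' htu').trans
      (cs.simple_mul_chainLE hr)
termination_by cs.length u

variable (cs)

theorem bruhatLE_inv {u w : W} (h : BruhatLE cs u w) : BruhatLE cs u⁻¹ w⁻¹ := by
  obtain ⟨l, hl, rfl, l', hl', rfl⟩ := h
  exact ⟨l.reverse, hl.reverse, wordProd_reverse .., l'.reverse, hl'.reverse, wordProd_reverse ..⟩

theorem bruhatLE_inv_iff {u w : W} : BruhatLE cs u⁻¹ w⁻¹ ↔ BruhatLE cs u w :=
  ⟨fun h => by simpa using cs.bruhatLE_inv h, cs.bruhatLE_inv⟩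

theorem subsingleton_rightDescents_of_minimal {w v : W} (hv : ¬ BruhatLE cs v w)
    (hmin : ∀ v' : W, ¬ BruhatLE cs v' w → BruhatLE cs v' v → v' = v) :
    {s : B | ℓ (v * σ s) < ℓ v}.Subsingleton := by
  simp only [bruhatLE_iff_chainLE] at hv hmin
  have hdesc {s : B} (hs : ℓ (v * σ s) < ℓ v) : v * σ s ≤ᵇ w := by
    by_contra h
    exact cs.length_mul_simple_ne v s (congrArg cs.length (hmin _ h (cs.mul_simple_chainLE hs)))
  intro s hs t ht
  by_contra hst
  exact hv (chainLE_of_mul_simple_chainLE_of_ne hst hs ht (hdesc hs) (hdesc ht))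

end CoxeterSystem

theorem essential_set_elements_are_bigrassmannian_general
    {B W : Type*} [Group W] {M : CoxeterMatrix B} (cs : CoxeterSystem M W)
    (w v : W) (hv : ¬ BruhatLE cs v w)
    (hmin : ∀ v' : W, ¬ BruhatLE cs v' w → BruhatLE cs v' v → v' = v) :
    {s : B | cs.length (v * cs.simple s) < cs.length v}.Subsingleton ∧
    {s : B | cs.length (v⁻¹ * cs.simple s) < cs.length v⁻¹}.Subsingleton := by
  refine ⟨cs.subsingleton_rightDescents_of_minimal hv hmin,
    cs.subsingleton_rightDescents_of_minimal (w := w⁻¹) (by rwa [cs.bruhatLE_inv_iff]) ?_⟩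
  intro v' hv' hv'v
  rw [← inv_inv v', cs.bruhatLE_inv_iff] at hv' hv'v
  rw [← hmin _ hv' hv'v, inv_inv]

/-- For any finite Coxeter system `(W,S)` and any `w ∈ W`, every Bruhat-minimal element `v`
of `{v : v ≰ w}` is bigrassmannian: both `v` and `v⁻¹` have at most one right descent. -/
theorem essential_set_elements_are_bigrassmannian
    {B W : Type*} [Group W] [Finite W] {M : CoxeterMatrix B} (cs : CoxeterSystem M W)
    (w v : W) (hv : ¬ BruhatLE cs v w)
    (hmin : ∀ v' : W, ¬ BruhatLE cs v' w → BruhatLE cs v' v → v' = v) :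
    {s : B | cs.length (v * cs.simple s) < cs.length v}.Subsingleton ∧
    {s : B | cs.length (v⁻¹ * cs.simple s) < cs.length v⁻¹}.Subsingleton :=
  essential_set_elements_are_bigrassmannian_general cs w v hv hmin
end

section
/- In any finite poset P, every dissector is join-irreducible: if v ∈ P and there exists w ∈ P such that P is the disjoint union of the principal order filter {u : u ≥ v} and the principal order ideal {u : u ≤ w}, then v is join-irreducible. -/
/-- In any finite poset, every dissector is join-irreducible: if there exists `w` such that
the poset is the disjoint union of the principal filter above `v` and the principal ideal
below `w`, then there is no subset `X` not containing `v` such that `v` is the least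
element among all upper bounds of `X`. -/
theorem dissector_is_join_irreducible {P : Type*} [PartialOrder P] [Finite P]
    (v w : P)
    (hdis : ∀ u : P, (v ≤ u ∨ u ≤ w) ∧ ¬ (v ≤ u ∧ u ≤ w)) :
    ¬ ∃ X : Set P, v ∉ X ∧ IsLeast {b : P | ∀ x ∈ X, x ≤ b} v := by
  rintro ⟨X, hvX, hub, hleast⟩
  have hvw : ¬ v ≤ w := fun h => (hdis v).2 ⟨le_refl v, h⟩
  have hXw : ∀ x ∈ X, x ≤ w := by
    intro x hx
    rcases (hdis x).1 with h | h
    · have : x = v := le_antisymm (hub x hx) h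
      exact absurd (this ▸ hx) hvX
    · exact h
  exact hvw (hleast hXw)
end

section
/- Let i < k and let μ be a partition with μ_k > i ≥ μ_{k+1}. Then s_μ = Σ_{m=1}^{k} (−1)^{k−m} h_{μ_m + k − i − m} s_{μ^{(m)}}, where μ^{(m)} = (μ_1,…,μ_{m−1}, μ_{m+1}−1,…,μ_k−1, i, μ_{k+1},…,μ_ℓ) and ℓ = ℓ(μ). -/
/-- The complete homogeneous symmetric polynomial in `n` variables over `ℤ`, indexed by an
integer, with the convention `h_r = 0` for `r < 0`. -/
noncomputable def hInt (n : ℕ) (r : ℤ) : MvPolynomial (Fin n) ℤ :=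
  if r < 0 then 0 else MvPolynomial.hsymm (Fin n) ℤ r.toNat

/-- Schur polynomial in `n` variables of a partition given as a list, via Jacobi–Trudi. -/
noncomputable def schur (n : ℕ) (l : List ℕ) : MvPolynomial (Fin n) ℤ :=
  Matrix.det (Matrix.of fun i j : Fin l.length =>
    hInt n ((l.get i : ℤ) + (j : ℤ) - (i : ℤ)))

/-- `l` is (the list of parts of) a partition: weakly decreasing with positive parts. -/
def IsPartitionList (l : List ℕ) : Prop := l.Pairwise (· ≥ ·) ∧ ∀ x ∈ l, 0 < x

/-- `μ^{(m)}` (1-based `m`): delete the entry `μ_m`, subtract `1` from `μ_{m+1},…,μ_k`,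
and insert `i` between positions `k−1` and `k`. -/
def muDel (μ : List ℕ) (i k m : ℕ) : List ℕ :=
  μ.take (m - 1) ++ ((μ.drop m).take (k - m)).map (· - 1) ++ [i] ++ μ.drop k

/-
Border the Jacobi–Trudi matrix `(h_{μ_p - p + q})` of `μ` (indices from `0`) by one row, for a
part `i + 1` inserted at position `k` (shifted part `i + 1 - k`), and one column, with shift
`k - 1 - i`. The new column repeats column `k - 1 - i`, which exists since `i < k ≤ ℓ(μ)`, so the
bordered determinant vanishes. Expand it along the new column. The new row meets it in `h_0 = 1`
and its minor is the Jacobi–Trudi matrix of `μ`. Deleting a row `m - 1 < k` leaves the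
Jacobi–Trudi matrix of `μ^{(m)}`, whose shifted parts are those of `μ` with the `m`-th removed and
`i + 1 - k` inserted at position `k - 1`. The rows below `k` meet the new column in `h` of a
negative index, as those parts are at most `i`.
-/

open Finset

section JacobiTrudi

variable {R : Type*} [CommRing R]

def jacobiTrudiDet (h : ℤ → R) {N : ℕ} (a : Fin N → ℤ) : R :=
  (Matrix.of fun p q : Fin N => h (a p + q)).det

theorem sum_neg_one_pow_mul_jacobiTrudiDet_succAbove (h : ℤ → R) {N : ℕ} (a : Fin (N + 1) → ℤ)
    {c : ℕ} (hc : c < N) :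
    ∑ p : Fin (N + 1), (-1) ^ (p : ℕ) * h (a p + c) * jacobiTrudiDet h (a ∘ p.succAbove) = 0 := by
  -- column `0` of `A` is the border column, and it repeats column `c + 1`
  set A : Matrix (Fin (N + 1)) (Fin (N + 1)) R :=
    Matrix.of fun p q => h (a p + (Fin.cons (c : ℤ) (fun j : Fin N => (j : ℤ)) : Fin (N + 1) → ℤ) q)
  have hA : A.det = 0 :=
    Matrix.det_zero_of_column_eq (i := 0) (j := Fin.succ ⟨c, hc⟩) (Fin.succ_ne_zero _).symm
      fun _ => rfl
  rw [← hA, Matrix.det_succ_column_zero]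
  rfl

end JacobiTrudi

theorem Fin.val_succAbove {N : ℕ} (p : Fin (N + 1)) (b : Fin N) :
    ((p.succAbove b : Fin (N + 1)) : ℕ) = if (b : ℕ) < p then (b : ℕ) else (b : ℕ) + 1 := by
  rcases lt_or_ge (Fin.castSucc b) p with h | h
  · rw [Fin.succAbove_of_castSucc_lt _ _ h, if_pos (show (b : ℕ) < p from h)]
    rfl
  · rw [Fin.succAbove_of_le_castSucc _ _ h, if_neg (not_lt.2 (show (p : ℕ) ≤ b from h))]
    rfl

theorem Fin.sum_univ_ite_val_lt {M : Type*} [AddCommMonoid M] {N k : ℕ} (hk : k ≤ N)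
    (f : ℕ → M) : ∑ j : Fin N, (if (j : ℕ) < k then f j else 0) = ∑ j ∈ range k, f j := by
  rw [Fin.sum_univ_eq_sum_range (fun j => if j < k then f j else 0), ← sum_range_add_sum_Ico _ hk,
    sum_eq_zero (s := Ico k N) fun j hj => if_neg (not_lt.2 (mem_Ico.1 hj).1), add_zero]
  exact sum_congr rfl fun j hj => if_pos (mem_range.1 hj)

theorem List.Pairwise.antitone_getD {l : List ℕ} (hl : l.Pairwise (· ≥ ·)) :
    Antitone fun b => l.getD b 0 := by
  intro p q hpq
  dsimp only
  rcases lt_or_ge q l.length with hq | hq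
  · simp only [List.getD_eq_getElem?_getD, List.getElem?_eq_getElem hq,
      List.getElem?_eq_getElem (hpq.trans_lt hq), Option.getD_some]
    rcases hpq.eq_or_lt with rfl | hlt
    · rfl
    · exact List.pairwise_iff_getElem.1 hl _ _ _ _ hlt
  · rw [List.getD_eq_default _ _ hq]
    exact Nat.zero_le _

theorem hInt_zero (n : ℕ) : hInt n 0 = 1 := by
  simp [hInt, MvPolynomial.hsymm_zero]

theorem hInt_of_neg (n : ℕ) {r : ℤ} (hr : r < 0) : hInt n r = 0 := if_pos hr

def shiftedParts (l : List ℕ) (b : ℕ) : ℤ := l.getD b 0 - b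

theorem schur_eq_jacobiTrudiDet (n : ℕ) (l : List ℕ) {N : ℕ} (hN : l.length = N) :
    schur n l = jacobiTrudiDet (hInt n) (fun b : Fin N => shiftedParts l b) := by
  subst hN
  unfold schur jacobiTrudiDet shiftedParts
  refine congrArg Matrix.det (Matrix.ext fun p q => ?_)
  simp only [Matrix.of_apply, List.get_eq_getElem, List.getD_eq_getElem?_getD,
    List.getElem?_eq_getElem p.isLt, Option.getD_some]
  congr 1
  ring

theorem muDel_length (μ : List ℕ) (i : ℕ) {k m : ℕ} (hm : 1 ≤ m) (hmk : m ≤ k)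
    (hk : k ≤ μ.length) : (muDel μ i k m).length = μ.length := by
  simp only [muDel, List.length_append, List.length_take, List.length_map, List.length_drop,
    List.length_cons, List.length_nil]
  omega

theorem muDel_getD (μ : List ℕ) (i : ℕ) {k m : ℕ} (hm : 1 ≤ m) (hmk : m ≤ k)
    (hk : k ≤ μ.length) (b : ℕ) :
    (muDel μ i k m).getD b 0 =
      if b < m - 1 then μ.getD b 0
      else if b < k - 1 then μ.getD (b + 1) 0 - 1
      else if b = k - 1 then i
      else μ.getD b 0 := by
  simp only [muDel, List.getD_eq_getElem?_getD, List.getElem?_append, List.getElem?_take,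
    List.getElem?_drop, List.getElem?_map, List.length_append, List.length_take,
    List.length_map, List.length_drop, List.length_cons, List.length_nil]
  split_ifs <;> first | omega | rfl | skip
  · rw [show m + (b - min (m - 1) μ.length) = b + 1 by omega]
    cases μ[b + 1]? <;> rfl
  · rw [show b - (min (m - 1) μ.length + min (k - m) (μ.length - m)) = 0 by omega]
    rfl
  · rw [show k + (b - (min (m - 1) μ.length + min (k - m) (μ.length - m) + (0 + 1))) = b by omega]

def insertShiftedPart (μ : List ℕ) (i k b : ℕ) : ℤ :=
  if b < k then shiftedParts μ b else if b = k then (i : ℤ) + 1 - k else shiftedParts μ (b - 1)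

theorem insertShiftedPart_succAbove_self (μ : List ℕ) (i : ℕ) {N : ℕ} (p : Fin (N + 1))
    (b : Fin N) : insertShiftedPart μ i p (p.succAbove b) = shiftedParts μ b := by
  unfold insertShiftedPart
  rw [Fin.val_succAbove]
  split_ifs <;> first | rfl | omega

theorem insertShiftedPart_succAbove_of_lt (μ : List ℕ) (i k : ℕ) {N : ℕ} (p : Fin (N + 1))
    (hp : (p : ℕ) < k) (hk : k ≤ μ.length) (hpos : ∀ b < k, 0 < μ.getD b 0) (b : Fin N) :
    insertShiftedPart μ i k (p.succAbove b) = shiftedParts (muDel μ i k (p + 1)) b := by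
  unfold insertShiftedPart shiftedParts
  rw [Fin.val_succAbove, muDel_getD μ i (by omega) hp hk]
  split_ifs <;> first | omega | (have := hpos (b + 1) (by omega); omega) |
    simp only [Nat.add_sub_cancel]

theorem jacobiTrudiDet_insertShiftedPart_succAbove_of_lt (n : ℕ) {μ : List ℕ} {i k : ℕ}
    (p : Fin (μ.length + 1)) (hp : (p : ℕ) < k) (hk : k ≤ μ.length)
    (hpos : ∀ b < k, 0 < μ.getD b 0) :
    jacobiTrudiDet (hInt n) ((fun q : Fin (μ.length + 1) => insertShiftedPart μ i k q) ∘
      p.succAbove) = schur n (muDel μ i k (p + 1)) := by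
  rw [schur_eq_jacobiTrudiDet n _ (muDel_length μ i (by omega) hp hk)]
  exact congrArg _ (funext (insertShiftedPart_succAbove_of_lt μ i k p hp hk hpos))

theorem neg_one_pow_mul_schur_add_sum_eq_zero (n : ℕ) {i k : ℕ} {μ : List ℕ}
    (hμ : μ.Pairwise (· ≥ ·)) (hik : i < k) (hcol : i < μ.getD (k - 1) 0)
    (hcol' : μ.getD k 0 ≤ i) :
    (-1) ^ k * schur n μ + ∑ j ∈ range k, (-1) ^ j *
      hInt n (shiftedParts μ j + (k - 1 - i : ℕ)) * schur n (muDel μ i k (j + 1)) = 0 := by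
  have hkL : k ≤ μ.length := by
    by_contra h
    rw [List.getD_eq_default _ _ (by omega)] at hcol
    omega
  have hpos : ∀ b < k, 0 < μ.getD b 0 := fun b hb =>
    (Nat.zero_le i).trans_lt (hcol.trans_le (hμ.antitone_getD (by omega)))
  set e : Fin (μ.length + 1) → ℤ := fun p => insertShiftedPart μ i k p
  set q : Fin (μ.length + 1) := ⟨k, by omega⟩
  have hzero := sum_neg_one_pow_mul_jacobiTrudiDet_succAbove (hInt n) e (c := k - 1 - i)
    (by omega)
  rw [Fin.sum_univ_succAbove _ q] at hzero
  convert hzero using 2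
  · have hrows : e ∘ q.succAbove = fun b : Fin μ.length => shiftedParts μ b :=
      funext (insertShiftedPart_succAbove_self μ i q)
    have hq : e q + (k - 1 - i : ℕ) = 0 := by
      simp only [e, q, insertShiftedPart, lt_self_iff_false, ↓reduceIte]
      omega
    rw [hrows, hq, hInt_zero, mul_one, ← schur_eq_jacobiTrudiDet n μ rfl]
  · rw [← Fin.sum_univ_ite_val_lt hkL]
    refine sum_congr rfl fun j _ => ?_
    rw [show e (q.succAbove j) = shiftedParts μ j from insertShiftedPart_succAbove_self μ i q j]
    split_ifs with hj
    · rw [Fin.succAbove_of_castSucc_lt q j hj,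
        jacobiTrudiDet_insertShiftedPart_succAbove_of_lt n _ hj hkL hpos]
      rfl
    · have hneg : shiftedParts μ j + (k - 1 - i : ℕ) < 0 := by
        have : μ.getD j 0 ≤ μ.getD k 0 := hμ.antitone_getD (not_lt.1 hj)
        unfold shiftedParts
        omega
      rw [hInt_of_neg n hneg, mul_zero, zero_mul]

theorem neg_one_pow_sub_succ {R : Type*} [Ring R] {j k : ℕ} (h : j < k) :
    (-1 : R) ^ (k - (j + 1)) = -((-1) ^ k * (-1) ^ j) := by
  rw [← pow_add, show k + j = k - (j + 1) + 2 * j + 1 by omega, pow_succ, pow_add, pow_mul]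
  simp

/-- Let `i < k` and `μ` a partition with `μ_k > i ≥ μ_{k+1}`.  Then
`s_μ = Σ_{m=1}^{k} (−1)^{k−m} h_{μ_m + k − i − m} s_{μ^{(m)}}`.  (Stated in `n` variables
for every `n`.) -/
theorem schur_column_expansion (n i k : ℕ) (μ : List ℕ) (hμ : IsPartitionList μ)
    (hik : i < k) (hcol : i < μ.getD (k - 1) 0) (hcol' : μ.getD k 0 ≤ i) :
    schur n μ = ∑ m ∈ Finset.Icc 1 k,
      (-1 : MvPolynomial (Fin n) ℤ) ^ (k - m) *
        hInt n ((μ.getD (m - 1) 0 : ℤ) + (k : ℤ) - (i : ℤ) - (m : ℤ)) *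
        schur n (muDel μ i k m) := by
  have hlaplace := neg_one_pow_mul_schur_add_sum_eq_zero n hμ.1 hik hcol hcol'
  rw [← Ico_add_one_right_eq_Icc, sum_Ico_eq_sum_range, Nat.add_sub_cancel]
  calc schur n μ = (-1) ^ k * ((-1) ^ k * schur n μ) := by
        rw [← mul_assoc, ← pow_add, Even.neg_one_pow ⟨k, rfl⟩, one_mul]
    _ = _ := by
        rw [eq_neg_of_add_eq_zero_left hlaplace, mul_neg, mul_sum, ← sum_neg_distrib]
        refine sum_congr rfl fun j hj => ?_
        rw [add_comm 1 j, neg_one_pow_sub_succ (mem_range.1 hj), Nat.add_sub_cancel]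
        unfold shiftedParts
        rw [show (μ.getD j 0 : ℤ) - j + (k - 1 - i : ℕ) = μ.getD j 0 + k - i - (j + 1 : ℕ) by
          omega]
        ring
end

section
/- Let w, w' ∈ W lie in the same coset of W_J with parabolic factorizations w = u·x and w' = u·x' (u ∈ W^J, x, x' ∈ W_J, both factorizations length-additive, ℓ(x') = ℓ(x)). Then the Schubert structure constant satisfies c^{w'}_{u,x} = δ_{w',w}, equivalently ∂_{w'}(S_u S_x) = δ_{x,x'}. -/
/-!
Since `u` has no right descent in `J`, `∂ᵢ S_u = 0` for `i ∈ J`, so `S_u` is `sᵢ`-invariant and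
the twisted Leibniz rule makes `∂ᵢ` linear over `S_u`. A reduced word for `x'` in the letters
of `J`, preceded by a reduced word for `u`, is a reduced word for `u x'` by length additivity,
hence `∂_{u x'} (S_u S_x) = ∂_u (S_u ∂_{x'} S_x) = δ_{x,x'} ∂_u S_u = δ_{x,x'}`.

The reduced word in the letters of `J` comes from the deletion property, i.e. from the exchange
property. That is proved with Bourbaki's representation of `W` on `W × ZMod 2`, where `sᵢ` acts
by `(t, e) ↦ (sᵢ t sᵢ, e + [t = sᵢ])`: it shows that the parity of the number of occurrences of
`t` in the right inversion sequence of a word depends only on the product of the word.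
-/

lemma mul_mul_inv_eq_iff_eq_inv_mul_mul {G : Type*} [Group G] (g t x : G) :
    g * t * g⁻¹ = x ↔ t = g⁻¹ * x * g := by
  rw [mul_inv_eq_iff_eq_mul, ← eq_inv_mul_iff_mul_eq, mul_assoc]

lemma conj_mul_eq_iff_of_mul_self {G : Type*} [Group G] {a b : G} (ha : a * a = 1)
    (hb : b * b = 1) (t : G) (r : ℕ) :
    a * b * t * (a * b)⁻¹ = (b * a) ^ r * b ↔ t = (b * a) ^ (r + 2) * b := by
  have hinv : (a * b)⁻¹ = b * a := by
    rw [mul_inv_rev, inv_eq_of_mul_eq_one_right ha, inv_eq_of_mul_eq_one_right hb]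
  rw [mul_mul_inv_eq_iff_eq_inv_mul_mul, hinv, pow_succ, pow_succ']
  simp only [mul_assoc]

namespace CoxeterSystem

variable {B W : Type*} [Group W] {M : CoxeterMatrix B} (cs : CoxeterSystem M W)

section ParityRepresentation

variable [DecidableEq W]

def parityFlip (c : W) : Equiv.Perm (W × ZMod 2) :=
  Function.Involutive.toPerm (fun p => (p.1, p.2 + if p.1 = c then 1 else 0)) fun p => by
    simp [add_assoc, CharTwo.add_self_eq_zero]

def reflectionPerm (c : W) : Equiv.Perm (W × ZMod 2) :=
  (MulAut.conj c).toEquiv.prodCongr (Equiv.refl _) * parityFlip c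

lemma reflectionPerm_apply (c : W) (p : W × ZMod 2) :
    reflectionPerm c p = (c * p.1 * c⁻¹, p.2 + if p.1 = c then 1 else 0) := rfl

lemma reflectionPerm_mul_pow {a b : W} (ha : a * a = 1) (hb : b * b = 1) (k : ℕ)
    (p : W × ZMod 2) :
    ((reflectionPerm a * reflectionPerm b) ^ k) p =
      ((a * b) ^ k * p.1 * ((a * b) ^ k)⁻¹,
        p.2 + ∑ r ∈ Finset.range (2 * k), if p.1 = (b * a) ^ r * b then 1 else 0) := by
  induction k generalizing p with
  | zero => simp
  | succ k ih =>
    have hstep : (reflectionPerm a * reflectionPerm b) p = (a * b * p.1 * (a * b)⁻¹,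
        p.2 + ((if p.1 = (b * a) ^ 0 * b then 1 else 0) +
          if p.1 = (b * a) ^ 1 * b then 1 else 0)) := by
      simp only [Equiv.Perm.mul_apply, reflectionPerm_apply, pow_zero, one_mul, pow_one,
        mul_mul_inv_eq_iff_eq_inv_mul_mul]
      simp only [inv_eq_of_mul_eq_one_right hb, mul_inv_rev, mul_assoc, add_assoc]
    rw [pow_succ, Equiv.Perm.mul_apply, hstep, ih]
    simp only [conj_mul_eq_iff_of_mul_self ha hb]
    refine Prod.ext ?_ ?_
    · simp only [pow_succ, mul_inv_rev, mul_assoc]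
    · rw [Nat.mul_succ, Finset.sum_range_succ', Finset.sum_range_succ']
      simp only
      ring

lemma isLiftable_reflectionPerm : M.IsLiftable fun i => reflectionPerm (cs.simple i) := by
  intro i j
  ext p : 1
  rw [reflectionPerm_mul_pow (cs.simple_mul_simple_self i) (cs.simple_mul_simple_self j),
    cs.simple_mul_simple_pow, two_mul, Finset.sum_range_add]
  -- `(sⱼ sᵢ) ^ M i j = 1`: the two halves of the parity sum agree and cancel in `ZMod 2`
  simp only [pow_add, cs.simple_mul_simple_pow', one_mul, CharTwo.add_self_eq_zero, add_zero,
    mul_one, inv_one, Equiv.Perm.coe_one, id_eq]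

noncomputable def parityRep : W →* Equiv.Perm (W × ZMod 2) :=
  cs.lift ⟨_, cs.isLiftable_reflectionPerm⟩

lemma parityRep_wordProd (ω : List B) (p : W × ZMod 2) :
    cs.parityRep (cs.wordProd ω) p =
      (cs.wordProd ω * p.1 * (cs.wordProd ω)⁻¹,
        p.2 + ((cs.rightInvSeq ω).count p.1 : ZMod 2)) := by
  induction ω generalizing p with
  | nil => simp [wordProd_nil, rightInvSeq]
  | cons i ω ih =>
    rw [wordProd_cons, map_mul, Equiv.Perm.mul_apply, ih, parityRep,
      cs.lift_apply_simple cs.isLiftable_reflectionPerm, reflectionPerm_apply]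
    refine Prod.ext (by simp only [mul_inv_rev, mul_assoc]) ?_
    simp only [rightInvSeq, List.count_cons, beq_iff_eq, mul_mul_inv_eq_iff_eq_inv_mul_mul,
      eq_comm (a := p.1)]
    split_ifs <;> simp [add_assoc]

lemma count_rightInvSeq_eq_of_wordProd_eq {ω ω' : List B} (h : cs.wordProd ω = cs.wordProd ω')
    (t : W) : ((cs.rightInvSeq ω).count t : ZMod 2) = (cs.rightInvSeq ω').count t := by
  simpa [parityRep_wordProd] using congrArg (fun g => (cs.parityRep g (t, 0)).2) h

end ParityRepresentation

lemma simple_mem_rightInvSeq_of_isRightDescent {ω : List B} {i : B}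
    (h : cs.IsRightDescent (cs.wordProd ω) i) : cs.simple i ∈ cs.rightInvSeq ω := by
  classical
  obtain ⟨ω', hω', hprod⟩ := cs.exists_isReduced (cs.wordProd ω * cs.simple i)
  have hconcat : cs.wordProd (ω'.concat i) = cs.wordProd ω := by
    rw [wordProd_concat, ← hprod, mul_assoc, simple_mul_simple_self, mul_one]
  have hnot : cs.simple i ∉ cs.rightInvSeq ω' := fun hmem => by
    have := (cs.isRightInversion_of_mem_rightInvSeq hω' hmem).2
    rw [← hprod, mul_assoc, simple_mul_simple_self, mul_one] at this
    exact lt_asymm h this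
  have hodd : ((cs.rightInvSeq ω).count (cs.simple i) : ZMod 2) = 1 := by
    rw [← cs.count_rightInvSeq_eq_of_wordProd_eq hconcat, rightInvSeq_concat,
      List.concat_eq_append, List.count_append]
    have hconj := List.count_map_of_injective (cs.rightInvSeq ω') _
      (MulAut.conj (cs.simple i)).injective (cs.simple i)
    rw [MulAut.conj_apply, mul_inv_cancel_right] at hconj
    simp [hconj, List.count_eq_zero_of_not_mem hnot]
  by_contra hmem
  rw [List.count_eq_zero_of_not_mem hmem] at hodd
  exact zero_ne_one hodd

lemma exists_wordProd_eraseIdx_eq_of_isRightDescent {ω : List B} {i : B}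
    (h : cs.IsRightDescent (cs.wordProd ω) i) :
    ∃ j < ω.length, cs.wordProd (ω.eraseIdx j) = cs.wordProd ω * cs.simple i := by
  obtain ⟨j, hj, hget⟩ := List.getElem_of_mem (cs.simple_mem_rightInvSeq_of_isRightDescent h)
  refine ⟨j, by simpa using hj, ?_⟩
  rw [← wordProd_mul_getD_rightInvSeq, List.getD_eq_getElem _ _ hj, hget]

lemma exists_isReduced_sublist_wordProd_eq (ω : List B) :
    ∃ ω', cs.IsReduced ω' ∧ ω'.Sublist ω ∧ cs.wordProd ω' = cs.wordProd ω := by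
  induction ω using List.reverseRecOn with
  | nil => exact ⟨[], by simp [IsReduced], List.Sublist.refl _, rfl⟩
  | append_singleton ω i ih =>
    obtain ⟨ω', hred, hsub, hprod⟩ := ih
    have hprod' : cs.wordProd (ω ++ [i]) = cs.wordProd ω' * cs.simple i := by
      rw [wordProd_append, wordProd_singleton, hprod]
    rcases cs.length_mul_simple (cs.wordProd ω') i with hlong | hshort
    · refine ⟨ω' ++ [i], ?_, hsub.append (.refl _), ?_⟩
      · rw [IsReduced, wordProd_append, wordProd_singleton, hlong, hred, List.length_append,
          List.length_singleton]
      · rw [hprod', wordProd_append, wordProd_singleton]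
    · have hdesc : cs.IsRightDescent (cs.wordProd ω') i := by unfold IsRightDescent; omega
      obtain ⟨j, hj, hj'⟩ := cs.exists_wordProd_eraseIdx_eq_of_isRightDescent hdesc
      have hsub' := (ω'.eraseIdx_sublist j).trans (hsub.trans (List.sublist_append_left ω [i]))
      refine ⟨ω'.eraseIdx j, ?_, hsub', by rw [hj', hprod']⟩
      rw [IsReduced, hj', List.length_eraseIdx_of_lt hj, ← hred.eq]
      omega

lemma exists_wordProd_eq_of_mem_closure {J : Set B} {w : W}
    (hw : w ∈ Subgroup.closure (cs.simple '' J)) :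
    ∃ ω : List B, (∀ i ∈ ω, i ∈ J) ∧ cs.wordProd ω = w := by
  induction hw using Subgroup.closure_induction with
  | mem g hg =>
    obtain ⟨i, hi, rfl⟩ := hg
    exact ⟨[i], by simpa using hi, cs.wordProd_singleton i⟩
  | one => exact ⟨[], by simp, cs.wordProd_nil⟩
  | mul g h _ _ ihg ihh =>
    obtain ⟨ω₁, hω₁, rfl⟩ := ihg
    obtain ⟨ω₂, hω₂, rfl⟩ := ihh
    exact ⟨ω₁ ++ ω₂, fun i hi => (List.mem_append.mp hi).elim (hω₁ i) (hω₂ i),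
      cs.wordProd_append ω₁ ω₂⟩
  | inv g _ ihg =>
    obtain ⟨ω, hω, rfl⟩ := ihg
    exact ⟨ω.reverse, fun i hi => hω i (List.mem_reverse.mp hi), cs.wordProd_reverse ω⟩

lemma exists_isReduced_of_mem_closure {J : Set B} {w : W}
    (hw : w ∈ Subgroup.closure (cs.simple '' J)) :
    ∃ ω : List B, cs.IsReduced ω ∧ (∀ i ∈ ω, i ∈ J) ∧ cs.wordProd ω = w := by
  obtain ⟨ω, hωJ, rfl⟩ := cs.exists_wordProd_eq_of_mem_closure hw
  obtain ⟨ω', hred, hsub, hprod⟩ := cs.exists_isReduced_sublist_wordProd_eq ω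
  exact ⟨ω', hred, fun i hi => hωJ i (hsub.subset hi), hprod⟩

lemma IsReduced.append {cs : CoxeterSystem M W} {ω₁ ω₂ : List B} (h₁ : cs.IsReduced ω₁)
    (h₂ : cs.IsReduced ω₂)
    (h : cs.length (cs.wordProd ω₁ * cs.wordProd ω₂) =
      cs.length (cs.wordProd ω₁) + cs.length (cs.wordProd ω₂)) :
    cs.IsReduced (ω₁ ++ ω₂) := by
  rw [IsReduced, wordProd_append, h, h₁, h₂, List.length_append]

end CoxeterSystem

theorem List.foldr_comp_append {α : Type*} (L₁ L₂ : List (α → α)) :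
    (L₁ ++ L₂).foldr (· ∘ ·) id = L₁.foldr (· ∘ ·) id ∘ L₂.foldr (· ∘ ·) id := by
  induction L₁ with
  | nil => rfl
  | cons f L ih => simp only [List.cons_append, List.foldr_cons, ih, Function.comp_assoc]

theorem List.foldr_comp_comm {α : Type*} {L : List (α → α)} {g : α → α}
    (h : ∀ f ∈ L, f ∘ g = g ∘ f) : L.foldr (· ∘ ·) id ∘ g = g ∘ L.foldr (· ∘ ·) id := by
  induction L with
  | nil => rfl
  | cons f L ih =>
    simp only [List.foldr_cons, Function.comp_assoc, ih fun f' hf' => h f' (.tail _ hf')]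
    rw [← Function.comp_assoc, h f (.head _), Function.comp_assoc]

theorem List.foldr_comp_apply_eq_self {α : Type*} {L : List (α → α)} {a : α}
    (h : ∀ f ∈ L, f a = a) : L.foldr (· ∘ ·) id a = a := by
  induction L with
  | nil => rfl
  | cons f L ih =>
    rw [List.foldr_cons, Function.comp_apply, ih fun f' hf' => h f' (.tail _ hf'), h f (.head _)]

theorem apply_mul_left_of_leibniz {A : Type*} [Semiring A] {D σ : A → A}
    (hLeib : ∀ f g, D (f * g) = D f * g + σ f * D g) {c : A} (hDc : D c = 0) (hσc : σ c = c)
    (f : A) : D (c * f) = c * D f := by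
  rw [hLeib, hDc, hσc, zero_mul, zero_add]

theorem schubert_structure_constant_sparsity_general
    {B W : Type*} [Group W] [DecidableEq W] {M : CoxeterMatrix B} (cs : CoxeterSystem M W)
    {k A : Type*} [Field k] [CommRing A] [Algebra k A]
    (act : W →* (A ≃ₐ[k] A))
    (S : W → A) (D : B → A → A) (Dw : W → A → A)
    (hLeib : ∀ (s : B) (f g : A),
      D s (f * g) = D s f * g + act (cs.simple s) f * D s g)
    (hker : ∀ (s : B) (f : A), D s f = 0 ↔ act (cs.simple s) f = f)
    (hDS : ∀ (s : B) (w : W), D s (S w) =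
      if cs.length (w * cs.simple s) < cs.length w then S (w * cs.simple s) else 0)
    (hDw : ∀ l : List B, cs.IsReduced l → Dw (cs.wordProd l) = (l.map D).foldr (· ∘ ·) id)
    (hdual : ∀ w w' : W, cs.length w = cs.length w' →
      Dw w' (S w) = if w = w' then 1 else 0)
    (J : Set B) (u x x' : W)
    (hu : ∀ i ∈ J, ¬ cs.length (u * cs.simple i) < cs.length u)
    (hx' : x' ∈ Subgroup.closure (cs.simple '' J))
    (hadd' : cs.length (u * x') = cs.length u + cs.length x')
    (hlen : cs.length x' = cs.length x) :
    Dw (u * x') (S u * S x) = if x = x' then 1 else 0 := by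
  obtain ⟨lu, hlu, hu_eq⟩ := cs.exists_isReduced u
  obtain ⟨lx, hlx, hlxJ, rfl⟩ := cs.exists_isReduced_of_mem_closure hx'
  have hDw_u : Dw u = (lu.map D).foldr (· ∘ ·) id := hu_eq ▸ hDw lu hlu
  have hDw_mul : Dw (u * cs.wordProd lx) = Dw u ∘ (lx.map D).foldr (· ∘ ·) id := by
    subst hu_eq
    rw [hDw_u, ← cs.wordProd_append, hDw _ (hlu.append hlx hadd'), List.map_append,
      List.foldr_comp_append]
  have hSu_linear : ∀ f ∈ lx.map D, f ∘ (S u * ·) = (S u * ·) ∘ f := by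
    simp only [List.forall_mem_map]
    intro i hi
    have hDSu : D i (S u) = 0 := by rw [hDS, if_neg (hu i (hlxJ i hi))]
    exact funext (apply_mul_left_of_leibniz (hLeib i) hDSu ((hker i _).mp hDSu))
  have hinner : (lx.map D).foldr (· ∘ ·) id (S u * S x) =
      S u * if x = cs.wordProd lx then 1 else 0 := by
    rw [← hdual _ _ hlen.symm, hDw lx hlx]
    exact congrFun (List.foldr_comp_comm hSu_linear) (S x)
  rw [hDw_mul, Function.comp_apply, hinner]
  split_ifs
  · rw [mul_one, hdual u u rfl, if_pos rfl]
  · rw [mul_zero, hDw_u]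
    refine List.foldr_comp_apply_eq_self ?_
    simpa only [List.forall_mem_map] using fun i _ => (hker i 0).mpr (map_zero _)

/-- Sparsity of Schubert structure constants (Lemma on parabolic factorizations), stated
for the Hiller/BGG–Demazure Schubert calculus of a finite Coxeter group `W` acting on a
polynomial algebra `A` over a field `k` of characteristic zero.  The data consists of the
action `act` of `W` on `A`, the Schubert polynomials `S w`, the divided difference
operators `D s` for simple reflections, and their compositions `Dw u`; the hypotheses
record the defining properties: the Leibniz rule, `D s f = 0 ↔ s(f) = f`,
`D s (S w) = S (w s)` if `s` is a descent of `w` and `0` otherwise, `Dw` is the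
composition of the `D s` along any reduced word, and `Dw w' (S w) = δ_{w,w'}` for
`ℓ(w) = ℓ(w')`.

Claim: if `w = u·x` and `w' = u·x'` are length-additive parabolic factorizations with
`u ∈ W^J`, `x, x' ∈ W_J` and `ℓ(x') = ℓ(x)`, then the structure constant
`c^{w'}_{u,x} = ∂_{w'}(S_u S_x)` equals `δ_{x,x'}` (equivalently `δ_{w,w'}`). -/
theorem schubert_structure_constant_sparsity
    {B W : Type*} [Group W] [Finite W] [DecidableEq W] {M : CoxeterMatrix B} (cs : CoxeterSystem M W)
    {k A : Type*} [Field k] [CharZero k] [CommRing A] [Algebra k A]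
    (act : W →* (A ≃ₐ[k] A))
    (S : W → A) (D : B → A → A) (Dw : W → A → A)
    (hLeib : ∀ (s : B) (f g : A),
      D s (f * g) = D s f * g + act (cs.simple s) f * D s g)
    (hker : ∀ (s : B) (f : A), D s f = 0 ↔ act (cs.simple s) f = f)
    (hDS : ∀ (s : B) (w : W), D s (S w) =
      if cs.length (w * cs.simple s) < cs.length w then S (w * cs.simple s) else 0)
    (hDw : ∀ l : List B, cs.IsReduced l → Dw (cs.wordProd l) = (l.map D).foldr (· ∘ ·) id)
    (hdual : ∀ w w' : W, cs.length w = cs.length w' →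
      Dw w' (S w) = if w = w' then 1 else 0)
    (J : Set B) (u x x' : W)
    (hu : ∀ i ∈ J, ¬ cs.length (u * cs.simple i) < cs.length u)
    (hx : x ∈ Subgroup.closure (cs.simple '' J))
    (hx' : x' ∈ Subgroup.closure (cs.simple '' J))
    (hadd : cs.length (u * x) = cs.length u + cs.length x)
    (hadd' : cs.length (u * x') = cs.length u + cs.length x')
    (hlen : cs.length x' = cs.length x) :
    Dw (u * x') (S u * S x) = if x = x' then 1 else 0 :=
  schubert_structure_constant_sparsity_general cs act S D Dw hLeib hker hDS hDw hdual J u x x' hu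
    hx' hadd' hlen
end

section
/- For a permutation w ∈ S_n and 1 ≤ t ≤ r,s ≤ n with t > r+s−n, one has t_{r,s}(w) ≥ t if and only if v_{r,s,t,n} ≰ w in Bruhat order, where v_{r,s,t,n} is the bigrassmannian permutation (1,…,t−1, s+1,…,s+r−t+1, t,…,s, s+r−t+2,…,n). -/
/-- The length (number of inversions) of a permutation of `Fin n`. -/
def permLength {n : ℕ} (w : Equiv.Perm (Fin n)) : ℕ :=
  (Finset.univ.filter fun p : Fin n × Fin n => p.1 < p.2 ∧ w p.2 < w p.1).card

/-- Bruhat order on `S_n`: the reflexive-transitive closure of multiplication by a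
transposition which increases length. -/
def PermBruhatLE {n : ℕ} (u w : Equiv.Perm (Fin n)) : Prop :=
  Relation.ReflTransGen
    (fun a b => (∃ i j : Fin n, i ≠ j ∧ b = a * Equiv.swap i j) ∧ permLength a < permLength b)
    u w

/-- One-line notation (1-based positions and values) of the bigrassmannian permutation
`v_{r,s,t,n} = (1,…,t−1, s+1,…,s+r−t+1, t,…,s, s+r−t+2,…,n)`. -/
def vOneLine (r s t p : ℕ) : ℕ :=
  if p < t then p
  else if p ≤ r then s + p - t + 1
  else if p ≤ r + s - t + 1 then p - r + t - 1
  else p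

namespace BGaux
open Finset Equiv
set_option linter.unusedSectionVars false

variable {n : ℕ}



lemma card_filter_val (P : ℕ → Prop) [DecidablePred P] :
    (univ.filter fun i : Fin n => P (i : ℕ)).card = ((range n).filter P).card := by
  apply Finset.card_bij (fun (i : Fin n) _ => (i : ℕ))
  · intro a ha; simp only [mem_filter, mem_univ, true_and] at ha
    simp only [mem_filter, mem_range]; exact ⟨a.isLt, ha⟩
  · intro a _ b _ h; exact Fin.val_injective h
  · intro b hb; simp only [mem_filter, mem_range] at hb
    exact ⟨⟨b, hb.1⟩, by simp only [mem_filter, mem_univ, true_and]; exact hb.2, rfl⟩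

lemma card_filter_val_lt (m : ℕ) (hm : m ≤ n) :
    (univ.filter fun i : Fin n => (i : ℕ) < m).card = m := by
  rw [card_filter_val (fun x => x < m)]
  have : (range n).filter (fun x => x < m) = range m := by
    ext x; simp only [mem_filter, mem_range]; omega
  rw [this, card_range]

lemma card_filter_val_ico (m1 m2 : ℕ) (hm : m2 ≤ n) :
    (univ.filter fun i : Fin n => m1 ≤ (i : ℕ) ∧ (i : ℕ) < m2).card = m2 - m1 := by
  rw [card_filter_val (fun x => m1 ≤ x ∧ x < m2)]
  have : (range n).filter (fun x => m1 ≤ x ∧ x < m2) = Finset.Ico m1 m2 := by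
    ext x; simp only [mem_filter, mem_range, Finset.mem_Ico]; omega
  rw [this, Nat.card_Ico]

lemma card_filter_perm (w : Equiv.Perm (Fin n)) (P : Fin n → Prop) [DecidablePred P] :
    (univ.filter fun i => P (w i)).card = (univ.filter P).card := by
  apply Finset.card_bij (fun (i : Fin n) _ => w i)
  · intro a ha; simp only [mem_filter, mem_univ, true_and] at ha ⊢; exact ha
  · intro a _ b _ h; exact w.injective h
  · intro b hb; simp only [mem_filter, mem_univ, true_and] at hb
    exact ⟨w.symm b, by simp only [mem_filter, mem_univ, true_and, Equiv.apply_symm_apply]; exact hb, w.apply_symm_apply b⟩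

/-- A downward-closed subset of `Fin n` is an initial segment. -/
lemma downward_closed (S : Finset (Fin n)) (h : ∀ p ∈ S, ∀ q : Fin n, q < p → q ∈ S) :
    ∀ p : Fin n, p ∈ S ↔ (p : ℕ) < S.card := by
  intro p
  constructor
  · intro hp
    have hsub : (univ.filter fun q : Fin n => (q : ℕ) < (p : ℕ) + 1) ⊆ S := by
      intro q hq
      simp only [mem_filter, mem_univ, true_and] at hq
      rcases lt_or_eq_of_le (show q ≤ p from Fin.le_def.mpr (by omega)) with h' | h'
      · exact h p hp q h'
      · rwa [h']
    have := Finset.card_le_card hsub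
    rw [card_filter_val_lt ((p : ℕ) + 1) p.isLt] at this
    omega
  · intro hp
    by_contra hpn
    have hsub : S ⊆ univ.filter fun q : Fin n => (q : ℕ) < (p : ℕ) := by
      intro x hx
      simp only [mem_filter, mem_univ, true_and]
      by_contra hxp
      have hpx : p ≤ x := Fin.le_def.mpr (by omega)
      rcases lt_or_eq_of_le hpx with h' | h'
      · exact hpn (h x hx p h')
      · exact hpn (h' ▸ hx)
    have := Finset.card_le_card hsub
    rw [card_filter_val_lt (p : ℕ) (le_of_lt p.isLt)] at this
    omega





lemma permLength_lt_swap (c : Equiv.Perm (Fin n)) (i j : Fin n) (hij : i < j)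
    (hc : c i < c j) :
    permLength c < permLength (c * Equiv.swap i j) := by
  classical
  have hne : i ≠ j := ne_of_lt hij
  set σ := Equiv.swap i j with hσ
  have hσσ : ∀ x, σ (σ x) = x := fun x => Equiv.swap_apply_self i j x
  have happ : ∀ x, (c * σ) x = c (σ x) := fun x => rfl
  set S := univ.filter fun p : Fin n × Fin n => p.1 < p.2 ∧ c p.2 < c p.1 with hS
  set T := univ.filter fun p : Fin n × Fin n => p.1 < p.2 ∧ (c * σ) p.2 < (c * σ) p.1 with hT
  have hijT : (i, j) ∈ T := by
    simp only [hT, mem_filter, mem_univ, true_and]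
    refine ⟨hij, ?_⟩
    rw [happ, happ, hσ, Equiv.swap_apply_left, Equiv.swap_apply_right]
    exact hc
  set F : Fin n × Fin n → Fin n × Fin n :=
    fun p => if σ p.1 < σ p.2 then (σ p.1, σ p.2) else p with hF
  have hmaps : ∀ p ∈ S, F p ∈ T.erase (i, j) := by
    rintro ⟨p₁, p₂⟩ hp
    simp only [hS, mem_filter, mem_univ, true_and] at hp
    obtain ⟨h12, hvv⟩ := hp
    by_cases h : σ p₁ < σ p₂
    · have hFp : F (p₁, p₂) = (σ p₁, σ p₂) := if_pos h
      rw [hFp, Finset.mem_erase]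
      constructor
      · intro heq
        have e1 : σ p₁ = i := congrArg Prod.fst heq
        have e2 : σ p₂ = j := congrArg Prod.snd heq
        have hp1 : p₁ = j := by
          have := congrArg σ e1; rw [hσσ] at this
          rw [this, hσ, Equiv.swap_apply_left]
        have hp2 : p₂ = i := by
          have := congrArg σ e2; rw [hσσ] at this
          rw [this, hσ, Equiv.swap_apply_right]
        rw [hp1, hp2] at h12
        exact absurd (lt_trans hij h12) (lt_irrefl i)
      · simp only [hT, mem_filter, mem_univ, true_and]
        refine ⟨h, ?_⟩
        rw [happ, happ, hσσ, hσσ]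
        exact hvv
    · have hFp : F (p₁, p₂) = (p₁, p₂) := if_neg h
      rw [hFp, Finset.mem_erase]
      by_cases h1i : p₁ = i
      · by_cases h2j : p₂ = j
        · exfalso
          rw [h1i, h2j] at hvv
          exact absurd hvv (not_lt.mpr (le_of_lt hc))
        · have h2i : p₂ ≠ i := by rw [h1i] at h12; exact ne_of_gt h12
          constructor
          · intro e; exact h2j (congrArg Prod.snd e)
          · simp only [hT, mem_filter, mem_univ, true_and]
            refine ⟨h12, ?_⟩
            rw [happ, happ, hσ, Equiv.swap_apply_of_ne_of_ne h2i h2j, h1i,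
              Equiv.swap_apply_left]
            rw [h1i] at hvv
            exact lt_trans hvv hc
      · by_cases h1j : p₁ = j
        · exfalso
          have h2i : p₂ ≠ i := by
            intro e; rw [h1j, e] at h12; exact absurd (lt_trans hij h12) (lt_irrefl i)
          have h2j : p₂ ≠ j := by rw [h1j] at h12; exact ne_of_gt h12
          rw [hσ, h1j, Equiv.swap_apply_right, Equiv.swap_apply_of_ne_of_ne h2i h2j] at h
          rw [h1j] at h12
          exact h (lt_trans hij h12)
        · by_cases h2i : p₂ = i
          · exfalso
            rw [hσ, h2i, Equiv.swap_apply_left, Equiv.swap_apply_of_ne_of_ne h1i h1j] at h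
            rw [h2i] at h12
            exact h (lt_trans h12 hij)
          · by_cases h2j : p₂ = j
            · constructor
              · intro e; exact h1i (congrArg Prod.fst e)
              · simp only [hT, mem_filter, mem_univ, true_and]
                refine ⟨h12, ?_⟩
                rw [happ, happ, hσ, h2j, Equiv.swap_apply_right,
                  Equiv.swap_apply_of_ne_of_ne h1i h1j]
                rw [h2j] at hvv
                exact lt_trans hc hvv
            · exfalso
              rw [hσ, Equiv.swap_apply_of_ne_of_ne h1i h1j,
                Equiv.swap_apply_of_ne_of_ne h2i h2j] at h
              exact h h12
  have hinj : Set.InjOn F ↑S := by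
    intro a ha b hb hab
    simp only [Finset.coe_filter, Set.mem_setOf_eq, mem_univ, true_and, hS] at ha hb
    by_cases h1 : σ a.1 < σ a.2 <;> by_cases h2 : σ b.1 < σ b.2
    · simp only [hF, if_pos h1, if_pos h2] at hab
      have e1 : σ a.1 = σ b.1 := congrArg Prod.fst hab
      have e2 : σ a.2 = σ b.2 := congrArg Prod.snd hab
      exact Prod.ext (σ.injective e1) (σ.injective e2)
    · exfalso
      simp only [hF, if_pos h1, if_neg h2] at hab
      have e1 : σ a.1 = b.1 := congrArg Prod.fst hab
      have e2 : σ a.2 = b.2 := congrArg Prod.snd hab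
      rw [← e1, ← e2, hσσ, hσσ] at h2
      exact h2 ha.1
    · exfalso
      simp only [hF, if_neg h1, if_pos h2] at hab
      have e1 : a.1 = σ b.1 := congrArg Prod.fst hab
      have e2 : a.2 = σ b.2 := congrArg Prod.snd hab
      rw [e1, e2, hσσ, hσσ] at h1
      exact h1 hb.1
    · simpa only [hF, if_neg h1, if_neg h2] using hab
  have h1 : S.card ≤ (T.erase (i, j)).card :=
    Finset.card_le_card_of_injOn F hmaps hinj
  have h2 : (T.erase (i, j)).card < T.card := Finset.card_erase_lt_of_mem hijT
  exact lt_of_le_of_lt h1 h2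




def rk (r s : ℕ) {n : ℕ} (w : Equiv.Perm (Fin n)) : ℕ :=
  (Finset.univ.filter fun i : Fin n => (i : ℕ) + 1 ≤ r ∧ (w i : ℕ) + 1 ≤ s).card

lemma rk_swap_eq (r s : ℕ) (w : Equiv.Perm (Fin n)) (i j : Fin n) (hij : i ≠ j) :
    rk r s (w * Equiv.swap i j)
      + ((if (i : ℕ) + 1 ≤ r ∧ (w i : ℕ) + 1 ≤ s then 1 else 0)
        + if (j : ℕ) + 1 ≤ r ∧ (w j : ℕ) + 1 ≤ s then 1 else 0)
    = rk r s w
      + ((if (i : ℕ) + 1 ≤ r ∧ (w j : ℕ) + 1 ≤ s then 1 else 0)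
        + if (j : ℕ) + 1 ≤ r ∧ (w i : ℕ) + 1 ≤ s then 1 else 0) := by
  classical
  unfold rk
  rw [Finset.card_filter, Finset.card_filter]
  have hjmem : j ∈ (univ : Finset (Fin n)).erase i := Finset.mem_erase.mpr ⟨hij.symm, mem_univ j⟩
  have split : ∀ g : Fin n → ℕ,
      ∑ x, g x = g i + (g j + ∑ x ∈ ((univ : Finset (Fin n)).erase i).erase j, g x) := by
    intro g
    rw [Finset.add_sum_erase _ g hjmem, Finset.add_sum_erase _ g (mem_univ i)]
  rw [split, split]
  have e1 : (w * Equiv.swap i j) i = w j := by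
    simp [Equiv.Perm.mul_apply]
  have e2 : (w * Equiv.swap i j) j = w i := by
    simp [Equiv.Perm.mul_apply]
  have e3 : ∀ x ∈ ((univ : Finset (Fin n)).erase i).erase j,
      (w * Equiv.swap i j) x = w x := by
    intro x hx
    simp only [Finset.mem_erase] at hx
    simp [Equiv.Perm.mul_apply, Equiv.swap_apply_of_ne_of_ne hx.2.1 hx.1]
  rw [Finset.sum_congr rfl fun x hx => by rw [e3 x hx]]
  rw [e1, e2]
  ring

lemma rk_swap_le (r s : ℕ) (w : Equiv.Perm (Fin n)) (i j : Fin n) (hij : i < j)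
    (hlt : w i < w j) :
    rk r s (w * Equiv.swap i j) ≤ rk r s w := by
  have h := rk_swap_eq r s w i j (ne_of_lt hij)
  have hij' : (i : ℕ) < (j : ℕ) := hij
  have hlt' : ((w i : Fin n) : ℕ) < ((w j : Fin n) : ℕ) := hlt
  by_cases hpi : (i : ℕ) + 1 ≤ r <;> by_cases hpj : (j : ℕ) + 1 ≤ r <;>
    by_cases hqi : (w i : ℕ) + 1 ≤ s <;> by_cases hqj : (w j : ℕ) + 1 ≤ s <;>
    simp only [hpi, hpj, hqi, hqj, and_true, and_false, true_and, false_and,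
      if_true, if_false] at h <;> omega

lemma rk_swap_le_succ (r s : ℕ) (w : Equiv.Perm (Fin n)) (i j : Fin n) (hij : i ≠ j) :
    rk r s (w * Equiv.swap i j) ≤ rk r s w + 1 := by
  have h := rk_swap_eq r s w i j hij
  by_cases hpi : (i : ℕ) + 1 ≤ r <;> by_cases hpj : (j : ℕ) + 1 ≤ r <;>
    by_cases hqi : (w i : ℕ) + 1 ≤ s <;> by_cases hqj : (w j : ℕ) + 1 ≤ s <;>
    simp only [hpi, hpj, hqi, hqj, and_true, and_false, true_and, false_and,
      if_true, if_false] at h <;> omega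

lemma rk_swap_eq_of_safe (r s : ℕ) (w : Equiv.Perm (Fin n)) (i j : Fin n) (hij : i < j)
    (hlt : w j < w i)
    (hsafe : ¬((i : ℕ) + 1 ≤ r ∧ ¬((j : ℕ) + 1 ≤ r) ∧ (w j : ℕ) + 1 ≤ s ∧
      ¬((w i : ℕ) + 1 ≤ s))) :
    rk r s (w * Equiv.swap i j) = rk r s w := by
  have h := rk_swap_eq r s w i j (ne_of_lt hij)
  have hij' : (i : ℕ) < (j : ℕ) := hij
  have hlt' : ((w j : Fin n) : ℕ) < ((w i : Fin n) : ℕ) := hlt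
  by_cases hpi : (i : ℕ) + 1 ≤ r <;> by_cases hpj : (j : ℕ) + 1 ≤ r <;>
    by_cases hqi : (w i : ℕ) + 1 ≤ s <;> by_cases hqj : (w j : ℕ) + 1 ≤ s <;>
    simp only [hpi, hpj, hqi, hqj, and_true, and_false, true_and, false_and,
      if_true, if_false, not_true, not_false_iff] at h hsafe <;> omega


lemma rk_step_aux (r s : ℕ) (a : Equiv.Perm (Fin n)) (i j : Fin n) (hij : i < j)
    (hlen : permLength a < permLength (a * Equiv.swap i j)) :
    rk r s (a * Equiv.swap i j) ≤ rk r s a := by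
  rcases lt_trichotomy (a i) (a j) with h | h | h
  · exact rk_swap_le r s a i j hij h
  · exact absurd (a.injective h) (ne_of_lt hij)
  · exfalso
    set b := a * Equiv.swap i j with hb
    have hbi : b i = a j := by simp [hb, Equiv.Perm.mul_apply]
    have hbj : b j = a i := by simp [hb, Equiv.Perm.mul_apply]
    have h' : b i < b j := by rw [hbi, hbj]; exact h
    have := permLength_lt_swap b i j hij h'
    rw [show b * Equiv.swap i j = a by
      rw [hb, mul_assoc, Equiv.swap_mul_self, mul_one]] at this
    omega

lemma rk_le_of_step (r s : ℕ) (a b : Equiv.Perm (Fin n))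
    (h : (∃ i j : Fin n, i ≠ j ∧ b = a * Equiv.swap i j) ∧ permLength a < permLength b) :
    rk r s b ≤ rk r s a := by
  obtain ⟨⟨i, j, hij, rfl⟩, hlen⟩ := h
  rcases hij.lt_or_gt with h1 | h1
  · exact rk_step_aux r s a i j h1 hlen
  · rw [Equiv.swap_comm] at hlen ⊢
    exact rk_step_aux r s a j i h1 hlen

lemma rk_le_of_bruhat (r s : ℕ) (u w : Equiv.Perm (Fin n)) (h : PermBruhatLE u w) :
    rk r s w ≤ rk r s u := by
  induction h with
  | refl => exact le_refl _
  | tail _ hstep ih => exact le_trans (rk_le_of_step r s _ _ hstep) ih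

section Main

variable {r s t : ℕ} (h1 : 1 ≤ t) (htr : t ≤ r) (hts : t ≤ s) (hrn : r ≤ n) (hsn : s ≤ n)
  (hrs : r + s < n + t) (v : Equiv.Perm (Fin n))
  (hv : ∀ p : Fin n, (v p : ℕ) + 1 = vOneLine r s t ((p : ℕ) + 1))

include h1 htr hts hrn hsn hrs hv

lemma v_head_low : ∀ p : Fin n, (p : ℕ) < t - 1 → (v p : ℕ) = (p : ℕ) := by
  intro p hp
  have h := hv p
  have hpn := p.isLt
  unfold vOneLine at h
  split_ifs at h <;> omega

lemma v_head_high : ∀ p : Fin n, t - 1 ≤ (p : ℕ) → (p : ℕ) < r →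
    (v p : ℕ) + t = s + (p : ℕ) + 1 := by
  intro p hp hp2
  have h := hv p
  have hpn := p.isLt
  unfold vOneLine at h
  split_ifs at h <;> omega

lemma v_tail_mono : ∀ p q : Fin n, p < q → ¬((p : ℕ) + 1 ≤ r) → v p < v q := by
  intro p q hpq hpr
  have hp := hv p
  have hq := hv q
  have hpn := p.isLt
  have hqn := q.isLt
  have hpq' : (p : ℕ) < (q : ℕ) := hpq
  have goal : (v p : ℕ) < (v q : ℕ) := by
    unfold vOneLine at hp hq
    split_ifs at hp hq <;> omega
  exact goal

lemma rk_v : rk r s v = t - 1 := by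
  unfold rk
  have heq : (univ.filter fun p : Fin n => (p : ℕ) + 1 ≤ r ∧ (v p : ℕ) + 1 ≤ s)
      = univ.filter fun p : Fin n => (p : ℕ) < t - 1 := by
    ext p
    simp only [mem_filter, mem_univ, true_and]
    have h := hv p
    have hpn := p.isLt
    unfold vOneLine at h
    split_ifs at h <;> omega
  rw [heq, card_filter_val_lt (t - 1) (by omega)]

omit hv

/-- Two permutations agreeing on the head, both increasing on the tail, are equal. -/
lemma ext_of_head_tail (u w : Equiv.Perm (Fin n))
    (hu : ∀ p q : Fin n, p < q → ¬((p : ℕ) + 1 ≤ r) → u p < u q)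
    (hw : ∀ p q : Fin n, p < q → ¬((p : ℕ) + 1 ≤ r) → w p < w q)
    (hagree : ∀ p : Fin n, (p : ℕ) + 1 ≤ r → u p = w p) : u = w := by
  classical
  by_contra hne
  set S := univ.filter fun p : Fin n => u p ≠ w p with hSdef
  have hSne : S.Nonempty := by
    by_contra hS
    apply hne
    apply Equiv.ext
    intro p
    by_contra hp
    exact hS ⟨p, by simp [hSdef, hp]⟩
  set p := S.min' hSne with hpdef
  have hpS : p ∈ S := S.min'_mem hSne
  have hne' : u p ≠ w p := by
    have := hpS; simp only [hSdef, mem_filter, mem_univ, true_and] at this; exact this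
  have hmin : ∀ q : Fin n, q < p → u q = w q := by
    intro q hq
    by_contra hne2
    exact absurd (S.min'_le q (by simp [hSdef, hne2])) (not_le.mpr hq)
  have hpr : ¬((p : ℕ) + 1 ≤ r) := fun h => hne' (hagree p h)
  rcases hne'.lt_or_gt with hlt | hlt
  · set q := w.symm (u p) with hqdef
    have hq : w q = u p := w.apply_symm_apply _
    have hqp : q ≠ p := by
      intro e; rw [e] at hq; exact hne' hq.symm
    rcases hqp.lt_or_gt with h' | h'
    · have h2 := hmin q h'
      rw [hq] at h2
      exact hqp (u.injective h2)
    · have := hw p q h' hpr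
      rw [hq] at this
      exact absurd this (not_lt.mpr (le_of_lt hlt))
  · set q := u.symm (w p) with hqdef
    have hq : u q = w p := u.apply_symm_apply _
    have hqp : q ≠ p := by
      intro e; rw [e] at hq; exact hne' hq
    rcases hqp.lt_or_gt with h' | h'
    · have h2 := hmin q h'
      rw [hq] at h2
      exact hqp ((w.injective h2).symm)
    · have := hu p q h' hpr
      rw [hq] at this
      exact absurd this (not_lt.mpr (le_of_lt hlt))

include hv

lemma eq_v_of_no_safe (w : Equiv.Perm (Fin n))
    (hns : ∀ i j : Fin n, i < j → w j < w i →
      ((i : ℕ) + 1 ≤ r ∧ ¬((j : ℕ) + 1 ≤ r) ∧ ((w j : ℕ) + 1 ≤ s) ∧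
        ¬((w i : ℕ) + 1 ≤ s)))
    (hrk : rk r s w = t - 1) : w = v := by
  classical
  have W1 : ∀ i j : Fin n, i < j → (j : ℕ) < r → w i < w j := by
    intro i j hij hjr
    rcases lt_trichotomy (w i) (w j) with h | h | h
    · exact h
    · exact absurd (w.injective h) (ne_of_lt hij)
    · obtain ⟨_, h2, _, _⟩ := hns i j hij h
      omega
  have W2 : ∀ i j : Fin n, i < j → ¬((i : ℕ) + 1 ≤ r) → w i < w j := by
    intro i j hij hir
    rcases lt_trichotomy (w i) (w j) with h | h | h
    · exact h
    · exact absurd (w.injective h) (ne_of_lt hij)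
    · obtain ⟨h1', _, _, _⟩ := hns i j hij h
      exact absurd h1' hir
  have A1 : ∀ p : Fin n, (p : ℕ) < r → ((w p : ℕ) < s ↔ (p : ℕ) < t - 1) := by
    intro p hpr
    set D := univ.filter fun q : Fin n => (q : ℕ) + 1 ≤ r ∧ (w q : ℕ) + 1 ≤ s with hD
    have hdc := downward_closed D (by
      intro x hx q hq
      simp only [hD, mem_filter, mem_univ, true_and] at hx ⊢
      have hq' : (q : ℕ) < (x : ℕ) := hq
      refine ⟨by omega, ?_⟩
      have hmo : (w q : ℕ) < (w x : ℕ) := W1 q x hq (by omega)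
      omega)
    have hcard : D.card = t - 1 := hrk
    have hmem := hdc p
    rw [hcard] at hmem
    constructor
    · intro h
      exact hmem.mp (by simp only [hD, mem_filter, mem_univ, true_and]; omega)
    · intro h
      have := hmem.mpr h
      simp only [hD, mem_filter, mem_univ, true_and] at this
      omega
  have mono_gap : ∀ d : ℕ, ∀ p q : Fin n, (q : ℕ) = (p : ℕ) + d → (q : ℕ) < r →
      (w p : ℕ) + d ≤ (w q : ℕ) := by
    intro d
    induction d with
    | zero =>
      intro p q h _
      rw [show p = q from Fin.ext (by omega)]
      omega
    | succ d ih =>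
      intro p q hq hqr
      have hq' : (p : ℕ) + d < n := by have := q.isLt; omega
      have h1 := ih p ⟨(p : ℕ) + d, hq'⟩ rfl (by simp only [Fin.val_mk]; omega)
      have h2 : (⟨(p : ℕ) + d, hq'⟩ : Fin n) < q := by
        rw [Fin.lt_def]; simp only [Fin.val_mk]; omega
      have h3 : (w ⟨(p : ℕ) + d, hq'⟩ : ℕ) < (w q : ℕ) := W1 _ q h2 hqr
      omega
  have count_lt : ∀ p : Fin n,
      (univ.filter fun q : Fin n => w q < w p).card = (w p : ℕ) := by
    intro p
    have h := card_filter_perm w (fun y : Fin n => y < w p)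
    rw [h]
    have heq : (univ.filter fun y : Fin n => y < w p)
        = univ.filter fun y : Fin n => (y : ℕ) < ((w p : ℕ)) := by
      ext y
      simp only [Finset.mem_filter, Finset.mem_univ, true_and, Fin.lt_def]
    rw [heq, card_filter_val_lt _ (le_of_lt (w p).isLt)]
  have stepB : ∀ p : Fin n, (p : ℕ) < t - 1 → (w p : ℕ) = (p : ℕ) := by
    intro p hp
    have hpr : (p : ℕ) < r := by omega
    have hws : (w p : ℕ) < s := (A1 p hpr).mpr hp
    have hn0 : 0 < n := lt_of_le_of_lt (Nat.zero_le _) p.isLt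
    have hlow : (p : ℕ) ≤ (w p : ℕ) := by
      have := mono_gap (p : ℕ) ⟨0, hn0⟩ p (by simp only [Fin.val_mk]; omega) hpr
      omega
    have hsub : (univ.filter fun q : Fin n => w q < w p)
        ⊆ univ.filter fun q : Fin n => (q : ℕ) < (p : ℕ) := by
      intro q hq
      simp only [mem_filter, mem_univ, true_and] at hq ⊢
      by_contra hqp
      have hpq : p ≤ q := Fin.le_def.mpr (by omega)
      rcases lt_or_eq_of_le hpq with h' | h'
      · by_cases hqr : (q : ℕ) < r
        · exact absurd (W1 p q h' hqr) (not_lt.mpr (le_of_lt hq))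
        · obtain ⟨_, _, _, h4⟩ := hns p q h' hq
          omega
      · rw [h'] at hq; exact lt_irrefl _ hq
    have hcl := Finset.card_le_card hsub
    rw [count_lt p, card_filter_val_lt _ (le_of_lt p.isLt)] at hcl
    omega
  have stepC : ∀ p : Fin n, t - 1 ≤ (p : ℕ) → (p : ℕ) < r →
      (w p : ℕ) + (t - 1) = s + (p : ℕ) := by
    intro p hp1 hp2
    have ht1n : t - 1 < n := by omega
    have hwp0 : s ≤ (w (⟨t - 1, ht1n⟩ : Fin n) : ℕ) := by
      have hA := A1 ⟨t - 1, ht1n⟩ (by simp only [Fin.val_mk]; omega)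
      simp only [Fin.val_mk] at hA
      omega
    have hlow : s + ((p : ℕ) - (t - 1)) ≤ (w p : ℕ) := by
      have := mono_gap ((p : ℕ) - (t - 1)) ⟨t - 1, ht1n⟩ p
        (by simp only [Fin.val_mk]; omega) hp2
      omega
    have hsplit := Finset.card_filter_add_card_filter_not
      (s := univ.filter fun q : Fin n => w q < w p) (p := fun q : Fin n => (w q : ℕ) < s)
    rw [Finset.filter_filter, Finset.filter_filter, count_lt p] at hsplit
    have hb1 : (univ.filter fun q : Fin n => w q < w p ∧ (w q : ℕ) < s).card ≤ s := by
      have hsub : (univ.filter fun q : Fin n => w q < w p ∧ (w q : ℕ) < s)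
          ⊆ univ.filter fun q : Fin n => (w q : ℕ) < s := by
        intro q hq
        simp only [mem_filter, mem_univ, true_and] at hq ⊢
        exact hq.2
      have hc : (univ.filter fun q : Fin n => (w q : ℕ) < s).card = s := by
        have h := card_filter_perm w (fun y : Fin n => (y : ℕ) < s)
        rw [h, card_filter_val_lt s hsn]
      calc (univ.filter fun q : Fin n => w q < w p ∧ (w q : ℕ) < s).card
          ≤ (univ.filter fun q : Fin n => (w q : ℕ) < s).card := Finset.card_le_card hsub
        _ = s := hc
    have hb2 : (univ.filter fun q : Fin n => w q < w p ∧ ¬((w q : ℕ) < s)).card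
        ≤ (p : ℕ) - (t - 1) := by
      have hsub : (univ.filter fun q : Fin n => w q < w p ∧ ¬((w q : ℕ) < s))
          ⊆ univ.filter fun q : Fin n => t - 1 ≤ (q : ℕ) ∧ (q : ℕ) < (p : ℕ) := by
        intro q hq
        simp only [mem_filter, mem_univ, true_and, not_lt] at hq ⊢
        obtain ⟨hqlt, hqs⟩ := hq
        have hqp : (q : ℕ) < (p : ℕ) := by
          by_contra hcc
          have hpq : p ≤ q := Fin.le_def.mpr (by omega)
          rcases lt_or_eq_of_le hpq with h' | h'
          · by_cases hqr : (q : ℕ) < r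
            · exact absurd (W1 p q h' hqr) (not_lt.mpr (le_of_lt hqlt))
            · obtain ⟨_, _, h3, _⟩ := hns p q h' hqlt
              omega
          · rw [h'] at hqlt; exact lt_irrefl _ hqlt
        refine ⟨?_, hqp⟩
        by_contra hq1
        have := (A1 q (by omega)).mpr (by omega)
        omega
      have hcl := Finset.card_le_card hsub
      rw [card_filter_val_ico (t - 1) (p : ℕ) (le_of_lt p.isLt)] at hcl
      exact hcl
    omega
  have hhead : ∀ p : Fin n, (p : ℕ) + 1 ≤ r → w p = v p := by
    intro p hpr
    have : (w p : ℕ) = (v p : ℕ) := by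
      by_cases hp : (p : ℕ) < t - 1
      · rw [stepB p hp, v_head_low h1 htr hts hrn hsn hrs v hv p hp]
      · have h2 := stepC p (by omega) (by omega)
        have h3 := v_head_high h1 htr hts hrn hsn hrs v hv p (by omega) (by omega)
        omega
    exact Fin.val_injective this
  exact ext_of_head_tail h1 htr hts hrn hsn hrs w v W2
    (v_tail_mono h1 htr hts hrn hsn hrs v hv) hhead

omit hv

lemma exists_cross_inv (w : Equiv.Perm (Fin n)) (hrk : rk r s w < t) :
    ∃ p q : Fin n, p < q ∧ w q < w p := by
  classical
  have h1' : ∃ p : Fin n, (p : ℕ) + 1 ≤ r ∧ ¬((w p : ℕ) + 1 ≤ s) := by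
    by_contra hc
    push_neg at hc
    have hsub : (univ.filter fun i : Fin n => (i : ℕ) < r)
        ⊆ univ.filter fun i : Fin n => (i : ℕ) + 1 ≤ r ∧ (w i : ℕ) + 1 ≤ s := by
      intro i hi
      simp only [mem_filter, mem_univ, true_and] at hi ⊢
      exact ⟨by omega, by have := hc i (by omega); omega⟩
    have hcl := Finset.card_le_card hsub
    rw [card_filter_val_lt r hrn] at hcl
    unfold rk at hrk
    omega
  have h2' : ∃ q : Fin n, ¬((q : ℕ) + 1 ≤ r) ∧ (w q : ℕ) + 1 ≤ s := by
    by_contra hc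
    push_neg at hc
    have hsub : (univ.filter fun i : Fin n => (w i : ℕ) < s)
        ⊆ univ.filter fun i : Fin n => (i : ℕ) + 1 ≤ r ∧ (w i : ℕ) + 1 ≤ s := by
      intro i hi
      simp only [mem_filter, mem_univ, true_and] at hi ⊢
      refine ⟨?_, by omega⟩
      by_contra hir
      have := hc i (by omega)
      omega
    have hcs : (univ.filter fun i : Fin n => (w i : ℕ) < s).card = s := by
      have h := card_filter_perm w (fun y : Fin n => (y : ℕ) < s)
      rw [h, card_filter_val_lt s hsn]
    have hcl := Finset.card_le_card hsub
    unfold rk at hrk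
    omega
  obtain ⟨p, hp1, hp2⟩ := h1'
  obtain ⟨q, hq1, hq2⟩ := h2'
  exact ⟨p, q, Fin.lt_def.mpr (by omega), Fin.lt_def.mpr (by omega)⟩

include hv

lemma bruhat_of_rk_lt : ∀ N : ℕ, ∀ w : Equiv.Perm (Fin n), permLength w < N →
    rk r s w < t → PermBruhatLE v w := by
  intro N
  induction N with
  | zero => intro w h _; exact absurd h (Nat.not_lt_zero _)
  | succ N ih =>
    intro w hlen hrk
    by_cases hwv : w = v
    · rw [hwv]; exact Relation.ReflTransGen.refl
    · have key : ∃ i j : Fin n, i < j ∧ w j < w i ∧ rk r s (w * Equiv.swap i j) < t := by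
        by_cases hcase : rk r s w + 1 < t
        · obtain ⟨p, q, hpq, hinv⟩ := exists_cross_inv h1 htr hts hrn hsn hrs w (by omega)
          refine ⟨p, q, hpq, hinv, ?_⟩
          have := rk_swap_le_succ r s w p q (ne_of_lt hpq)
          omega
        · by_cases hsafe : ∃ i j : Fin n, i < j ∧ w j < w i ∧
              ¬((i : ℕ) + 1 ≤ r ∧ ¬((j : ℕ) + 1 ≤ r) ∧ ((w j : ℕ) + 1 ≤ s) ∧
                ¬((w i : ℕ) + 1 ≤ s))
          · obtain ⟨i, j, ha, hb, hcnd⟩ := hsafe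
            exact ⟨i, j, ha, hb, by
              rw [rk_swap_eq_of_safe r s w i j ha hb hcnd]; exact hrk⟩
          · exfalso
            push_neg at hsafe
            refine hwv (eq_v_of_no_safe h1 htr hts hrn hsn hrs v hv w ?_ (by omega))
            intro i j hij hlt
            obtain ⟨a, b, c, d⟩ := hsafe i j hij hlt
            exact ⟨a, by omega, c, by omega⟩
      obtain ⟨i, j, hij, hinv, hrk'⟩ := key
      have hw'eq : (w * Equiv.swap i j) * Equiv.swap i j = w := by
        rw [mul_assoc, Equiv.swap_mul_self, mul_one]
      have hlen' : permLength (w * Equiv.swap i j) < permLength w := by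
        have h' : (w * Equiv.swap i j) i < (w * Equiv.swap i j) j := by
          simp only [Equiv.Perm.mul_apply, Equiv.swap_apply_left, Equiv.swap_apply_right]
          exact hinv
        have h := permLength_lt_swap (w * Equiv.swap i j) i j hij h'
        rwa [hw'eq] at h
      have hb : PermBruhatLE v (w * Equiv.swap i j) := ih _ (by omega) hrk'
      exact Relation.ReflTransGen.tail hb ⟨⟨i, j, ne_of_lt hij, hw'eq.symm⟩, hlen'⟩

end Main

end BGaux

/-- For `w ∈ S_n` and `1 ≤ t ≤ r, s ≤ n` with `t > r + s − n`:
`t_{r,s}(w) = |{w_1,…,w_r} ∩ {1,…,s}| ≥ t` iff `v_{r,s,t,n} ≰ w` in Bruhat order. -/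
theorem rank_ge_iff_not_bruhat_le
    (n r s t : ℕ) (h1 : 1 ≤ t) (htr : t ≤ r) (hts : t ≤ s) (hrn : r ≤ n) (hsn : s ≤ n)
    (hrs : r + s < n + t)
    (w v : Equiv.Perm (Fin n))
    (hv : ∀ p : Fin n, (v p : ℕ) + 1 = vOneLine r s t ((p : ℕ) + 1)) :
    t ≤ (Finset.univ.filter fun i : Fin n => (i : ℕ) + 1 ≤ r ∧ (w i : ℕ) + 1 ≤ s).card ↔
      ¬ PermBruhatLE v w := by
  have hwrk : (Finset.univ.filter fun i : Fin n => (i : ℕ) + 1 ≤ r ∧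
      (w i : ℕ) + 1 ≤ s).card = BGaux.rk r s w := rfl
  rw [hwrk]
  constructor
  · intro h hvw
    have hle := BGaux.rk_le_of_bruhat r s v w hvw
    have hrkv := BGaux.rk_v h1 htr hts hrn hsn hrs v hv
    omega
  · intro hnb
    by_contra h2
    push_neg at h2
    exact hnb (BGaux.bruhat_of_rk_lt h1 htr hts hrn hsn hrs v hv (permLength w + 1) w
      (Nat.lt_succ_self _) (by omega))
end

section
/- In the Pieri rule expansion e_k · s_ν = Σ s_λ over partitions λ obtained from ν by adding a vertical strip of size k, if ν is obtained from a partition μ ⊇ i^j with ℓ(μ) = j+k > j by subtracting 1 from its last k parts, then every λ ≠ μ in the expansion satisfies λ ≺_j μ, where λ ≺_j μ means either |λ̂| < |μ̂|, or |λ̂| = |μ̂| and λ̂ < μ̂ in dominance order, with λ̂ = (λ_{j+1}, λ_{j+2}, …). -/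
/-- Step 1 combinatorics: let `μ` be a partition (as a weakly decreasing function
`ℕ → ℕ`, 0-indexed) containing the rectangle `i^j` with exactly `j + k` nonzero parts
(`k ≥ 1`), and let `ν` be obtained from `μ` by subtracting `1` from its last `k`
nonzero parts.  Then every partition `λ ≠ μ` obtained from `ν` by adding a vertical
strip of size `k` (i.e. `ν ⊆ λ`, `λ_m ≤ ν_m + 1` for all `m`, `|λ| = |ν| + k`)
satisfies `λ ≺_j μ`: either `|λ̂| < |μ̂|`, or `|λ̂| = |μ̂|` and `λ̂ < μ̂` strictly in
dominance order, where `λ̂ = (λ_{j+1}, λ_{j+2}, …)`. -/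
theorem vertical_strip_terms_smaller
    (i j k : ℕ) (hk : 1 ≤ k)
    (μ lam ν : ℕ → ℕ)
    (hμanti : Antitone μ)
    (hμrect : ∀ m, m < j → i ≤ μ m)
    (hμlen : ∀ m, 0 < μ m ↔ m < j + k)
    (hν : ∀ m, ν m = if j ≤ m ∧ m < j + k then μ m - 1 else μ m)
    (hlamanti : Antitone lam)
    (hlamfin : ∃ N, ∀ m, N ≤ m → lam m = 0)
    (hstrip : ∀ m, ν m ≤ lam m ∧ lam m ≤ ν m + 1)
    (hsize : ∑ᶠ m, lam m = (∑ᶠ m, ν m) + k)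
    (hne : lam ≠ μ) :
    (∑ᶠ m, lam (m + j)) < (∑ᶠ m, μ (m + j)) ∨
      ((∑ᶠ m, lam (m + j)) = (∑ᶠ m, μ (m + j)) ∧
        (fun m => lam (m + j)) ≠ (fun m => μ (m + j)) ∧
        ∀ K : ℕ, ∑ m ∈ Finset.range K, lam (m + j) ≤ ∑ m ∈ Finset.range K, μ (m + j)) := by
  classical
  obtain ⟨N0, hN0⟩ := hlamfin
  set N := max N0 (j + k) with hNdef
  have hNk : j + k ≤ N := le_max_right _ _
  have hkN : k ≤ N := by omega
  have hlamN : ∀ m, N ≤ m → lam m = 0 := fun m hm => hN0 m (le_trans (le_max_left _ _) hm)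
  have hμ0 : ∀ m, j + k ≤ m → μ m = 0 := by
    intro m hm
    by_contra h
    have := (hμlen m).1 (Nat.pos_of_ne_zero h)
    omega
  have hμpos : ∀ m, m < j + k → 1 ≤ μ m := fun m hm => (hμlen m).2 hm
  have hν0 : ∀ m, j + k ≤ m → ν m = 0 := by
    intro m hm
    rw [hν m, if_neg (by omega)]
    exact hμ0 m hm
  have hνeq : ∀ m, m < j → ν m = μ m := by
    intro m hm
    rw [hν m, if_neg (by omega)]
  have hνμ : ∀ m, j ≤ m → m < j + k → ν m + 1 = μ m := by
    intro m h1 h2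
    have := hμpos m h2
    rw [hν m, if_pos ⟨h1, h2⟩]
    omega
  set d : ℕ → ℕ := fun m => lam m - ν m with hd
  have hlamd : ∀ m, lam m = ν m + d m := by
    intro m; have := (hstrip m).1; simp only [hd]; omega
  have hd1 : ∀ m, d m ≤ 1 := by
    intro m; have := hstrip m; simp only [hd]; omega
  -- finsum conversions
  have hSlam : ∑ᶠ m, lam m = ∑ m ∈ Finset.range (j + N), lam m := by
    apply finsum_eq_sum_of_support_subset
    intro m hm
    simp only [Function.mem_support] at hm
    simp only [Finset.coe_range, Set.mem_Iio]
    by_contra h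
    exact hm (hlamN m (by omega))
  have hSν : ∑ᶠ m, ν m = ∑ m ∈ Finset.range (j + N), ν m := by
    apply finsum_eq_sum_of_support_subset
    intro m hm
    simp only [Function.mem_support] at hm
    simp only [Finset.coe_range, Set.mem_Iio]
    by_contra h
    exact hm (hν0 m (by omega))
  have hTlam : ∑ᶠ m, lam (m + j) = ∑ m ∈ Finset.range N, lam (m + j) := by
    apply finsum_eq_sum_of_support_subset
    intro m hm
    simp only [Function.mem_support] at hm
    simp only [Finset.coe_range, Set.mem_Iio]
    by_contra h
    exact hm (hlamN _ (by omega))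
  have hTμ : ∑ᶠ m, μ (m + j) = ∑ m ∈ Finset.range N, μ (m + j) := by
    apply finsum_eq_sum_of_support_subset
    intro m hm
    simp only [Function.mem_support] at hm
    simp only [Finset.coe_range, Set.mem_Iio]
    by_contra h
    exact hm (hμ0 _ (by omega))
  -- total of d is k
  have hdsum : ∑ m ∈ Finset.range (j + N), d m = k := by
    have h1 : ∑ m ∈ Finset.range (j + N), lam m
        = ∑ m ∈ Finset.range (j + N), ν m + ∑ m ∈ Finset.range (j + N), d m := by
      rw [← Finset.sum_add_distrib]
      exact Finset.sum_congr rfl fun m _ => hlamd m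
    rw [hSlam, hSν] at hsize
    omega
  have hsplit : ∑ m ∈ Finset.range j, d m + ∑ m ∈ Finset.range N, d (j + m) = k := by
    rw [← Finset.sum_range_add]; exact hdsum
  set a := ∑ m ∈ Finset.range j, d m with ha
  set b := ∑ m ∈ Finset.range N, d (j + m) with hb
  -- tail sums
  have hTlam' : ∑ m ∈ Finset.range N, lam (m + j)
      = ∑ m ∈ Finset.range N, ν (m + j) + b := by
    rw [hb, ← Finset.sum_add_distrib]
    exact Finset.sum_congr rfl fun m _ => by rw [hlamd (m + j), Nat.add_comm j m]
  have hindic : ∑ m ∈ Finset.range N, (if m < k then (1:ℕ) else 0) = k := by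
    rw [← Finset.sum_subset (Finset.range_subset_range.2 hkN)
      (fun x _ hx => by simp only [Finset.mem_range, not_lt] at hx; rw [if_neg (by omega)])]
    rw [Finset.sum_congr rfl fun x hx => if_pos (Finset.mem_range.1 hx), Finset.sum_const,
      Finset.card_range, smul_eq_mul, mul_one]
  have hTμ' : ∑ m ∈ Finset.range N, μ (m + j)
      = ∑ m ∈ Finset.range N, ν (m + j) + k := by
    rw [← hindic, ← Finset.sum_add_distrib]
    refine Finset.sum_congr rfl fun m _ => ?_
    by_cases hm : m < k
    · rw [if_pos hm, hνμ (m + j) (by omega) (by omega)]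
    · rw [if_neg hm, hν0 (m + j) (by omega), hμ0 (m + j) (by omega)]
  by_cases hbk : b < k
  · left
    rw [hTlam, hTμ, hTlam', hTμ']
    omega
  · -- b = k, a = 0
    right
    have ha0 : a = 0 := by omega
    have hd0 : ∀ m, m < j → d m = 0 := by
      intro m hm
      have := (Finset.sum_eq_zero_iff.1 ha0.symm.symm) m (Finset.mem_range.2 hm)
      exact this
    have hlamlow : ∀ m, m < j → lam m = μ m := by
      intro m hm
      rw [hlamd m, hd0 m hm, hνeq m hm]; omega
    have hTeq : ∑ᶠ m, lam (m + j) = ∑ᶠ m, μ (m + j) := by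
      rw [hTlam, hTμ, hTlam', hTμ']
      omega
    refine ⟨hTeq, ?_, ?_⟩
    · intro hfun
      apply hne
      funext m
      by_cases hm : m < j
      · exact hlamlow m hm
      · have : lam ((m - j) + j) = μ ((m - j) + j) := congrFun hfun (m - j)
        rwa [Nat.sub_add_cancel (by omega)] at this
    · intro K
      by_cases hK : K ≤ k
      · refine Finset.sum_le_sum fun m hm => ?_
        have hmk : m < k := lt_of_lt_of_le (Finset.mem_range.1 hm) hK
        have := (hstrip (m + j)).2
        rw [← hνμ (m + j) (by omega) (by omega)]
        exact this
      · have h1 : ∑ m ∈ Finset.range K, lam (m + j)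
            ≤ ∑ m ∈ Finset.range (max K N), lam (m + j) :=
          Finset.sum_le_sum_of_subset (Finset.range_subset_range.2 (le_max_left _ _))
        have h2 : ∑ m ∈ Finset.range (max K N), lam (m + j)
            = ∑ m ∈ Finset.range N, lam (m + j) := by
          rw [← Finset.sum_subset (Finset.range_subset_range.2 (le_max_right K N))
            (fun x _ hx => by
              simp only [Finset.mem_range, not_lt] at hx
              exact hlamN _ (by omega))]
        have h3 : ∑ m ∈ Finset.range N, μ (m + j)
            = ∑ m ∈ Finset.range K, μ (m + j) := by
          rcases le_total N K with h | h
          · exact Finset.sum_subset (Finset.range_subset_range.2 h)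
              (fun x _ hx => by
                simp only [Finset.mem_range, not_lt] at hx
                exact hμ0 _ (by omega))
          · exact (Finset.sum_subset (Finset.range_subset_range.2 h)
              (fun x _ hx => by
                simp only [Finset.mem_range, not_lt] at hx
                exact hμ0 _ (by omega))).symm
        calc ∑ m ∈ Finset.range K, lam (m + j)
            ≤ ∑ m ∈ Finset.range N, lam (m + j) := h1.trans (le_of_eq h2)
          _ = ∑ m ∈ Finset.range N, μ (m + j) := by rw [hTlam', hTμ']; omega
          _ = ∑ m ∈ Finset.range K, μ (m + j) := h3
end
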